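/- arXiv:math/9809202 — 3 statements merged into one kernel-verified Lean document; each statement's English description precedes it below -/
import Mathlib

section
/- Let 𝒞 be a finite set of finite graphs, and let T*_𝒞 be the set of all sentences in the first-order language of graphs (one binary relation symbol, interpreted as the adjacency relation of a simple graph) that are true in every graph belonging to E_𝒞. Then a countable graph M is a model of T*_𝒞 if and only if M belongs to E_𝒞. -/
open FirstOrder SimpleGraph

/-- `C` is isomorphic to a (not necessarily induced) subgraph of `G`. -/
def SubIso {α β : Type*} (C : SimpleGraph α) (G : SimpleGraph β) : Prop :=
  ∃ f : α ↪ β, ∀ u v, C.Adj u v → G.Adj (f u) (f v)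

/-- `G` omits the family `𝒞`: no member of `𝒞` is isomorphic to a subgraph of `G`. -/
def CFree {ι : Type} {nn : ι → ℕ} (𝒞 : ∀ i, SimpleGraph (Fin (nn i)))
    {V : Type} (G : SimpleGraph V) : Prop :=
  ∀ i, ¬ SubIso (𝒞 i) G

/-- `G` is existentially complete in `H`, where `e` realizes `G` as an induced subgraph of
`H`: for all finite `A ⊆ V(G)` and finite `B ⊆ V(H)` containing (the image of) `A`, there is
an injection `f : B → V(G)` which is the identity on `A` and is an isomorphism of the graph
induced by `H` on `B` onto the graph induced by `G` on `f(B)`. -/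
def ExtComplete {V W : Type} (G : SimpleGraph V) (H : SimpleGraph W) (e : G ↪g H) : Prop :=
  ∀ (A : Finset V) (B : Finset W), (∀ a ∈ A, e a ∈ B) →
    ∃ f : W → V, Set.InjOn f ↑B ∧ (∀ a ∈ A, f (e a) = a) ∧
      ∀ u ∈ B, ∀ v ∈ B, (H.Adj u v ↔ G.Adj (f u) (f v))

/-- Membership in `E_𝒞`: countable, `𝒞`-free, and existentially complete in every countable
`𝒞`-free graph containing it as an induced subgraph. -/
def InEC {ι : Type} {nn : ι → ℕ} (𝒞 : ∀ i, SimpleGraph (Fin (nn i)))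
    {V : Type} (G : SimpleGraph V) : Prop :=
  Countable V ∧ CFree 𝒞 G ∧
    ∀ (W : Type) (H : SimpleGraph W), Countable W → CFree 𝒞 H →
      ∀ e : G ↪g H, ExtComplete G H e

/-- Satisfaction of a sentence of the first-order language of graphs in a simple graph. -/
def GSat {V : Type} (G : SimpleGraph V) (φ : Language.graph.Sentence) : Prop :=
  letI := G.structure
  V ⊨ φ

/-- Realization of a formula of the first-order language of graphs in a simple graph. -/
def GRealize {V : Type} (G : SimpleGraph V) {α : Type} (φ : Language.graph.Formula α)
    (v : α → V) : Prop :=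
  letI := G.structure
  φ.Realize v

/-- The theory `T*_𝒞`: all graph-language sentences true in every member of `E_𝒞`. -/
def TheoryEC {ι : Type} {nn : ι → ℕ} (𝒞 : ∀ i, SimpleGraph (Fin (nn i))) :
    Set Language.graph.Sentence :=
  {φ | ∀ (V : Type) (G : SimpleGraph V), InEC 𝒞 G → GSat G φ}

/-- An existential formula: an existential closure of a quantifier-free formula. -/
def IsExistentialFormula {α : Type} (φ : Language.graph.Formula α) : Prop :=
  ∃ (k : ℕ) (ψ : Language.graph.BoundedFormula α k), ψ.IsQF ∧ φ = ψ.exs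

/-- The algebraic closure of `A` in `G`: the set of vertices `a` such that some existential
formula with parameters from `A` has finitely many realizations in `G`, one of which is `a`. -/
def aclG {V : Type} (G : SimpleGraph V) (A : Set V) : Set V :=
  {a | ∃ (m : ℕ) (φ : Language.graph.Formula (Fin (m + 1))) (p : Fin m → V),
    IsExistentialFormula φ ∧ (∀ i, p i ∈ A) ∧
    {a' : V | GRealize G φ (Fin.cons a' p)}.Finite ∧
    GRealize G φ (Fin.cons a p)}

/-- There is a universal countable `𝒞`-free graph: a countable `𝒞`-free graph into which
every countable `𝒞`-free graph embeds as an induced subgraph. -/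
def ExistsUniversal {ι : Type} {nn : ι → ℕ} (𝒞 : ∀ i, SimpleGraph (Fin (nn i))) : Prop :=
  ∃ (U : Type) (GU : SimpleGraph U), Countable U ∧ CFree 𝒞 GU ∧
    ∀ (W : Type) (H : SimpleGraph W), Countable W → CFree 𝒞 H → Nonempty (H ↪g GU)

open FirstOrder Language SimpleGraph

namespace StmtAux

def adjF {α : Type} (a b : α) : Language.graph.Formula α :=
  Language.adj.formula₂ (Term.var a) (Term.var b)

def eqF {α : Type} (a b : α) : Language.graph.Formula α :=
  Term.equal (Term.var a) (Term.var b)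

noncomputable def iInfS {α β : Type} (s : Finset β) (f : β → Language.graph.Formula α) :
    Language.graph.Formula α :=
  BoundedFormula.iInf (fun b : s => f b)

noncomputable def iSupS {α β : Type} (s : Finset β) (f : β → Language.graph.Formula α) :
    Language.graph.Formula α :=
  BoundedFormula.iSup (fun b : s => f b)

noncomputable def iAllsF {α β γ : Type} [Finite γ] (f : α → β ⊕ γ)
    (φ : Language.graph.Formula α) : Language.graph.Formula β :=
  Formula.iAlls γ (φ.relabel f)

noncomputable def iExsF {α β γ : Type} [Finite γ] (f : α → β ⊕ γ)
    (φ : Language.graph.Formula α) : Language.graph.Formula β :=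
  Formula.iExs γ (φ.relabel f)

variable {V : Type} (G : SimpleGraph V) {α : Type}

@[simp] lemma grealize_adjF (a b : α) (v : α → V) :
    GRealize G (adjF a b) v ↔ G.Adj (v a) (v b) := by
  letI := G.structure
  rw [GRealize, adjF, Formula.realize_rel₂]
  simp [SimpleGraph.structure]
  rfl

@[simp] lemma grealize_eqF (a b : α) (v : α → V) :
    GRealize G (eqF a b) v ↔ v a = v b := by
  letI := G.structure
  rw [GRealize, eqF, Formula.realize_equal]
  simp

@[simp] lemma grealize_not (φ : Language.graph.Formula α) (v : α → V) :
    GRealize G φ.not v ↔ ¬ GRealize G φ v := by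
  letI := G.structure
  rw [GRealize, GRealize, Formula.realize_not]

@[simp] lemma grealize_inf (φ ψ : Language.graph.Formula α) (v : α → V) :
    GRealize G (φ ⊓ ψ) v ↔ GRealize G φ v ∧ GRealize G ψ v := by
  letI := G.structure
  rw [GRealize, GRealize, GRealize, Formula.realize_inf]

@[simp] lemma grealize_imp (φ ψ : Language.graph.Formula α) (v : α → V) :
    GRealize G (φ.imp ψ) v ↔ (GRealize G φ v → GRealize G ψ v) := by
  letI := G.structure
  rw [GRealize, GRealize, GRealize, Formula.realize_imp]

@[simp] lemma grealize_top (v : α → V) : GRealize G (⊤ : Language.graph.Formula α) v := by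
  letI := G.structure
  rw [GRealize]
  exact Formula.realize_top.2 trivial

@[simp] lemma grealize_bot (v : α → V) : ¬ GRealize G (⊥ : Language.graph.Formula α) v := by
  letI := G.structure
  rw [GRealize]
  simp [Formula.Realize]

@[simp] lemma grealize_iInf {β : Type} (s : Finset β) (f : β → Language.graph.Formula α)
    (v : α → V) : GRealize G (iInfS s f) v ↔ ∀ b ∈ s, GRealize G (f b) v := by
  letI := G.structure
  show (BoundedFormula.iInf _).Realize v default ↔ _
  rw [BoundedFormula.realize_iInf]
  exact ⟨fun h b hb => h ⟨b, hb⟩, fun h b => h b.1 b.2⟩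

@[simp] lemma grealize_iSup {β : Type} (s : Finset β) (f : β → Language.graph.Formula α)
    (v : α → V) : GRealize G (iSupS s f) v ↔ ∃ b ∈ s, GRealize G (f b) v := by
  letI := G.structure
  show (BoundedFormula.iSup _).Realize v default ↔ _
  rw [BoundedFormula.realize_iSup]
  exact ⟨fun ⟨b, h⟩ => ⟨b.1, b.2, h⟩, fun ⟨b, hb, h⟩ => ⟨⟨b, hb⟩, h⟩⟩

@[simp] lemma grealize_iAlls {β γ : Type} [Finite γ] (f : α → β ⊕ γ)
    (φ : Language.graph.Formula α) (v : β → V) :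
    GRealize G (iAllsF f φ) v ↔ ∀ i : γ → V, GRealize G φ (fun a => Sum.elim v i (f a)) := by
  letI := G.structure
  rw [GRealize, iAllsF, Formula.realize_iAlls]
  exact forall_congr' fun i => Formula.realize_relabel

@[simp] lemma grealize_iExs {β γ : Type} [Finite γ] (f : α → β ⊕ γ)
    (φ : Language.graph.Formula α) (v : β → V) :
    GRealize G (iExsF f φ) v ↔ ∃ i : γ → V, GRealize G φ (fun a => Sum.elim v i (f a)) := by
  letI := G.structure
  rw [GRealize, iExsF, Formula.realize_iExs]
  exact exists_congr fun i => Formula.realize_relabel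

/-! ### The free extension graph -/

variable {m k : ℕ}

/-- Symmetrised boolean adjacency pattern. -/
def Es (Eb : Fin m ⊕ Fin k → Fin m ⊕ Fin k → Bool) (u v : Fin m ⊕ Fin k) : Bool :=
  Eb u v || Eb v u

lemma Es_comm (Eb : Fin m ⊕ Fin k → Fin m ⊕ Fin k → Bool) (u v : Fin m ⊕ Fin k) :
    Es Eb u v = Es Eb v u := Bool.or_comm _ _

/-- `G` extended by `k` new points glued along `p` according to the pattern `Eb`. -/
def PG (G : SimpleGraph V) (Eb : Fin m ⊕ Fin k → Fin m ⊕ Fin k → Bool)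
    (p : Fin m → V) : SimpleGraph (V ⊕ Fin k) where
  Adj u w :=
    match u, w with
    | .inl a, .inl b => G.Adj a b
    | .inl a, .inr j => ∃ i, p i = a ∧ Es Eb (.inl i) (.inr j) = true
    | .inr j, .inl a => ∃ i, p i = a ∧ Es Eb (.inl i) (.inr j) = true
    | .inr j, .inr j' => j ≠ j' ∧ Es Eb (.inr j) (.inr j') = true
  symm := by
    constructor
    rintro (a | j) (b | j') h
    · exact h.symm
    · exact h
    · exact h
    · exact ⟨Ne.symm h.1, by rw [Es_comm]; exact h.2⟩
  loopless := by
    constructor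
    rintro (a | j) h
    · exact G.loopless.irrefl a h
    · exact h.1 rfl

variable {Eb : Fin m ⊕ Fin k → Fin m ⊕ Fin k → Bool}

@[simp] lemma PG_adj_inl_inl (G : SimpleGraph V) (p : Fin m → V) (a b : V) :
    (PG G Eb p).Adj (Sum.inl a) (Sum.inl b) ↔ G.Adj a b := Iff.rfl

@[simp] lemma PG_adj_inl_inr (G : SimpleGraph V) (p : Fin m → V) (a : V) (j : Fin k) :
    (PG G Eb p).Adj (Sum.inl a) (Sum.inr j) ↔ ∃ i, p i = a ∧ Es Eb (.inl i) (.inr j) = true :=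
  Iff.rfl

@[simp] lemma PG_adj_inr_inl (G : SimpleGraph V) (p : Fin m → V) (a : V) (j : Fin k) :
    (PG G Eb p).Adj (Sum.inr j) (Sum.inl a) ↔ ∃ i, p i = a ∧ Es Eb (.inl i) (.inr j) = true :=
  Iff.rfl

@[simp] lemma PG_adj_inr_inr (G : SimpleGraph V) (p : Fin m → V) (j j' : Fin k) :
    (PG G Eb p).Adj (Sum.inr j) (Sum.inr j') ↔ j ≠ j' ∧ Es Eb (.inr j) (.inr j') = true :=
  Iff.rfl

/-! ### The pattern formulas -/

/-- Placement of the vertices of a candidate copy. -/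
def place {n : ℕ} (ρ : Fin n → Option (Fin k)) (z : {w : Fin n // ρ w = none} → V)
    (u : Fin n) : V ⊕ Fin k :=
  if h : ρ u = none then .inl (z ⟨u, h⟩)
  else .inr ((ρ u).get (Option.isSome_iff_ne_none.mpr h))

open Classical in
/-- Edge requirement for a candidate copy. -/
noncomputable def edgeTh {n : ℕ} (Eb : Fin m ⊕ Fin k → Fin m ⊕ Fin k → Bool)
    (ρ : Fin n → Option (Fin k)) (u v : Fin n) :
    Language.graph.Formula (Fin m ⊕ {w : Fin n // ρ w = none}) :=
  if hu : ρ u = none then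
    if hv : ρ v = none then adjF (Sum.inr ⟨u, hu⟩) (Sum.inr ⟨v, hv⟩)
    else iSupS Finset.univ fun i : Fin m =>
      if Es Eb (Sum.inl i) (Sum.inr ((ρ v).get (Option.isSome_iff_ne_none.mpr hv))) = true
      then eqF (Sum.inr ⟨u, hu⟩) (Sum.inl i) else ⊥
  else if hv : ρ v = none then
    iSupS Finset.univ fun i : Fin m =>
      if Es Eb (Sum.inl i) (Sum.inr ((ρ u).get (Option.isSome_iff_ne_none.mpr hu))) = true
      then eqF (Sum.inr ⟨v, hv⟩) (Sum.inl i) else ⊥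
  else if ((ρ u).get (Option.isSome_iff_ne_none.mpr hu) ≠ (ρ v).get (Option.isSome_iff_ne_none.mpr hv) ∧
      Es Eb (Sum.inr ((ρ u).get (Option.isSome_iff_ne_none.mpr hu)))
        (Sum.inr ((ρ v).get (Option.isSome_iff_ne_none.mpr hv))) = true)
    then ⊤ else ⊥

open Classical in
/-- Distinctness requirement for a candidate copy. -/
noncomputable def distTh {n : ℕ} (ρ : Fin n → Option (Fin k)) (u v : Fin n) :
    Language.graph.Formula (Fin m ⊕ {w : Fin n // ρ w = none}) :=
  if hu : ρ u = none then
    if hv : ρ v = none then (eqF (Sum.inr (⟨u, hu⟩ : {w : Fin n // ρ w = none}))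
      (Sum.inr ⟨v, hv⟩)).not else ⊤
  else if hv : ρ v = none then ⊤
  else if (ρ u).get (Option.isSome_iff_ne_none.mpr hu) =
      (ρ v).get (Option.isSome_iff_ne_none.mpr hv) then ⊥ else ⊤

lemma grealize_edgeTh (Eb : Fin m ⊕ Fin k → Fin m ⊕ Fin k → Bool) (p : Fin m → V)
    {n : ℕ} (ρ : Fin n → Option (Fin k)) (z : {w : Fin n // ρ w = none} → V) (u v : Fin n) :
    GRealize G (edgeTh Eb ρ u v) (Sum.elim p z) ↔
      (PG G Eb p).Adj (place ρ z u) (place ρ z v) := by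
  unfold edgeTh place
  by_cases hu : ρ u = none
  · rw [dif_pos hu, dif_pos hu]
    by_cases hv : ρ v = none
    · rw [dif_pos hv, dif_pos hv, grealize_adjF]
      exact Iff.rfl
    · rw [dif_neg hv, dif_neg hv, grealize_iSup]
      constructor
      · rintro ⟨i, -, hi⟩
        by_cases hE : Es Eb (Sum.inl i)
            (Sum.inr ((ρ v).get (Option.isSome_iff_ne_none.mpr hv))) = true
        · rw [if_pos hE, grealize_eqF] at hi
          exact ⟨i, hi.symm, hE⟩
        · rw [if_neg hE] at hi
          exact absurd hi (grealize_bot G _)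
      · rintro ⟨i, hpi, hE⟩
        refine ⟨i, Finset.mem_univ _, ?_⟩
        rw [if_pos hE, grealize_eqF]
        exact hpi.symm
  · rw [dif_neg hu, dif_neg hu]
    by_cases hv : ρ v = none
    · rw [dif_pos hv, dif_pos hv, grealize_iSup]
      constructor
      · rintro ⟨i, -, hi⟩
        by_cases hE : Es Eb (Sum.inl i)
            (Sum.inr ((ρ u).get (Option.isSome_iff_ne_none.mpr hu))) = true
        · rw [if_pos hE, grealize_eqF] at hi
          exact ⟨i, hi.symm, hE⟩
        · rw [if_neg hE] at hi
          exact absurd hi (grealize_bot G _)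
      · rintro ⟨i, hpi, hE⟩
        refine ⟨i, Finset.mem_univ _, ?_⟩
        rw [if_pos hE, grealize_eqF]
        exact hpi.symm
    · rw [dif_neg hv, dif_neg hv]
      by_cases hc : ((ρ u).get (Option.isSome_iff_ne_none.mpr hu) ≠
          (ρ v).get (Option.isSome_iff_ne_none.mpr hv) ∧
          Es Eb (Sum.inr ((ρ u).get (Option.isSome_iff_ne_none.mpr hu)))
            (Sum.inr ((ρ v).get (Option.isSome_iff_ne_none.mpr hv))) = true)
      · rw [if_pos hc]
        simpa using hc
      · rw [if_neg hc]
        constructor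
        · intro h
          exact absurd h (grealize_bot G _)
        · intro h
          exact absurd h hc

lemma grealize_distTh (p : Fin m → V) {n : ℕ} (ρ : Fin n → Option (Fin k))
    (z : {w : Fin n // ρ w = none} → V) (u v : Fin n) (huv : u ≠ v) :
    GRealize G (distTh (m := m) ρ u v) (Sum.elim p z) ↔ place ρ z u ≠ place ρ z v := by
  unfold distTh place
  by_cases hu : ρ u = none
  · rw [dif_pos hu, dif_pos hu]
    by_cases hv : ρ v = none
    · rw [dif_pos hv, dif_pos hv, grealize_not, grealize_eqF]
      simp
    · rw [dif_neg hv, dif_neg hv]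
      simp
  · rw [dif_neg hu, dif_neg hu]
    by_cases hv : ρ v = none
    · rw [dif_pos hv, dif_pos hv]
      simp
    · rw [dif_neg hv, dif_neg hv]
      by_cases hc : (ρ u).get (Option.isSome_iff_ne_none.mpr hu) =
          (ρ v).get (Option.isSome_iff_ne_none.mpr hv)
      · rw [if_pos hc]
        simp [hc]
      · rw [if_neg hc]
        simp [hc]

open Classical in
/-- Formula forbidding a copy of `Cl` placed according to `ρ`. -/
noncomputable def theta (Eb : Fin m ⊕ Fin k → Fin m ⊕ Fin k → Bool) {n : ℕ}
    (Cl : SimpleGraph (Fin n)) (ρ : Fin n → Option (Fin k)) :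
    Language.graph.Formula (Fin m ⊕ {w : Fin n // ρ w = none}) :=
  iInfS Finset.univ fun q : Fin n × Fin n =>
    (if Cl.Adj q.1 q.2 then edgeTh Eb ρ q.1 q.2 else ⊤) ⊓
      (if q.1 = q.2 then ⊤ else distTh ρ q.1 q.2)

lemma grealize_theta (Eb : Fin m ⊕ Fin k → Fin m ⊕ Fin k → Bool) (p : Fin m → V)
    {n : ℕ} (Cl : SimpleGraph (Fin n)) (ρ : Fin n → Option (Fin k))
    (z : {w : Fin n // ρ w = none} → V) :
    GRealize G (theta Eb Cl ρ) (Sum.elim p z) ↔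
      (Function.Injective (place ρ z) ∧
        ∀ u v, Cl.Adj u v → (PG G Eb p).Adj (place ρ z u) (place ρ z v)) := by
  rw [theta, grealize_iInf]
  constructor
  · intro h
    constructor
    · intro u v huv
      by_contra hne
      have := (h (u, v) (Finset.mem_univ _))
      rw [grealize_inf] at this
      have h2 := this.2
      rw [if_neg hne, grealize_distTh G p ρ z u v hne] at h2
      exact h2 huv
    · intro u v huv
      have := (h (u, v) (Finset.mem_univ _))
      rw [grealize_inf] at this
      have h1 := this.1
      rw [if_pos huv, grealize_edgeTh] at h1
      exact h1
  · rintro ⟨hinj, hedge⟩ q _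
    rw [grealize_inf]
    constructor
    · by_cases hq : Cl.Adj q.1 q.2
      · rw [if_pos hq, grealize_edgeTh]
        exact hedge _ _ hq
      · rw [if_neg hq]
        exact grealize_top G _
    · by_cases hq : q.1 = q.2
      · rw [if_pos hq]
        exact grealize_top G _
      · rw [if_neg hq, grealize_distTh G p ρ z q.1 q.2 hq]
        exact fun hh => hq (hinj hh)

/-- The conjunction over all forbidden graphs and placements: no forbidden subgraph appears
in the free extension. -/
noncomputable def chi {ι : Type} [Finite ι] {nn : ι → ℕ} (𝒞 : ∀ i, SimpleGraph (Fin (nn i)))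
    (m k : ℕ) (Eb : Fin m ⊕ Fin k → Fin m ⊕ Fin k → Bool) :
    Language.graph.Formula (Fin m) :=
  letI := Fintype.ofFinite ι
  iInfS Finset.univ fun l : ι =>
    iInfS Finset.univ fun ρ : Fin (nn l) → Option (Fin k) =>
      iAllsF (id : Fin m ⊕ {w : Fin (nn l) // ρ w = none} →
          Fin m ⊕ {w : Fin (nn l) // ρ w = none})
        (theta Eb (𝒞 l) ρ).not

lemma grealize_chi {ι : Type} [Finite ι] {nn : ι → ℕ} (𝒞 : ∀ i, SimpleGraph (Fin (nn i)))
    (Eb : Fin m ⊕ Fin k → Fin m ⊕ Fin k → Bool) (p : Fin m → V) :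
    GRealize G (chi 𝒞 m k Eb) p ↔ CFree 𝒞 (PG G Eb p) := by
  letI := Fintype.ofFinite ι
  rw [chi, grealize_iInf]
  constructor
  · intro h l hsub
    obtain ⟨f, hf⟩ := hsub
    set ρ : Fin (nn l) → Option (Fin k) :=
      fun u => Sum.elim (fun _ => none) (fun j => some j) (f u) with hρ
    have hex : ∀ u (h' : ρ u = none), ∃ a, f u = Sum.inl a := by
      intro u h'
      rcases hfu : f u with a | j
      · exact ⟨a, rfl⟩
      · rw [hρ] at h'
        simp only [hfu] at h'
        exact absurd h' (by simp)
    set z : {w : Fin (nn l) // ρ w = none} → V :=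
      fun w => Classical.choose (hex w.1 w.2) with hz
    have hplace : ∀ u, place ρ z u = f u := by
      intro u
      rcases hfu : f u with a | j
      · have h' : ρ u = none := by simp [hρ, hfu]
        rw [place, dif_pos h', ← hfu]
        exact (Classical.choose_spec (hex u h')).symm
      · have h' : ρ u = some j := by simp [hρ, hfu]
        rw [place, dif_neg (by rw [h']; simp)]
        congr 1
        simp [h']
    have h2 := h l (Finset.mem_univ _)
    rw [grealize_iInf] at h2
    have h3 := h2 ρ (Finset.mem_univ _)
    rw [grealize_iAlls] at h3
    have h4 := h3 z
    rw [grealize_not] at h4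
    apply h4
    have : (fun a => Sum.elim p z (id a)) = Sum.elim p z := rfl
    rw [this, grealize_theta]
    constructor
    · intro a b hab
      rw [hplace, hplace] at hab
      exact f.injective hab
    · intro a b hab
      rw [hplace, hplace]
      exact hf a b hab
  · intro h l _
    rw [grealize_iInf]
    intro ρ _
    rw [grealize_iAlls]
    intro z
    rw [grealize_not]
    intro hth
    have : (fun a => Sum.elim p z (id a)) = Sum.elim p z := rfl
    rw [this, grealize_theta] at hth
    exact h l ⟨⟨place ρ z, hth.1⟩, hth.2⟩


/-- Satisfaction of a universally-closed formula. -/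
lemma gsat_iAlls {m : ℕ} (body : Language.graph.Formula (Fin m)) :
    GSat G (iAllsF (Sum.inr : Fin m → Empty ⊕ Fin m) body) ↔
      ∀ p : Fin m → V, GRealize G body p := by
  letI := G.structure
  rw [GSat, Sentence.Realize, iAllsF, Formula.realize_iAlls]
  simp only [Formula.realize_relabel, Sum.elim_comp_inr]
  constructor
  · intro h p
    have := h p
    rw [GRealize]
    convert this using 2
  · intro h i
    have := h i
    rw [GRealize] at this
    convert this using 2

/-! ### The 𝒞-freeness sentences -/

open Classical in
/-- Sentence asserting that `C` is not (isomorphic to) a subgraph. -/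
noncomputable def freeSent (n : ℕ) (C : SimpleGraph (Fin n)) : Language.graph.Sentence :=
  iAllsF (Sum.inr : Fin n → Empty ⊕ Fin n)
    (BoundedFormula.not <| iInfS Finset.univ (fun q : Fin n × Fin n =>
      if q.1 = q.2 then ⊤
      else ((if C.Adj q.1 q.2 then adjF q.1 q.2 else ⊤) ⊓ (eqF q.1 q.2).not)))

lemma gsat_freeSent {n : ℕ} (C : SimpleGraph (Fin n)) :
    GSat G (freeSent n C) ↔ ¬ SubIso C G := by
  rw [freeSent, gsat_iAlls]
  constructor
  · intro h hsub
    obtain ⟨f, hf⟩ := hsub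
    refine (grealize_not G _ f).mp (h f) ?_
    rw [grealize_iInf]
    intro q _
    by_cases hq : q.1 = q.2
    · rw [if_pos hq]; exact grealize_top G _
    · rw [if_neg hq, grealize_inf]
      constructor
      · by_cases hadj : C.Adj q.1 q.2
        · rw [if_pos hadj, grealize_adjF]; exact hf q.1 q.2 hadj
        · rw [if_neg hadj]; exact grealize_top G _
      · rw [grealize_not, grealize_eqF]
        exact fun hh => hq (f.injective hh)
  · intro h p
    rw [grealize_not]
    intro hp
    rw [grealize_iInf] at hp
    refine h ⟨⟨p, ?_⟩, ?_⟩
    · intro u v huv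
      by_contra hne
      have := hp (u, v) (Finset.mem_univ _)
      rw [if_neg hne, grealize_inf, grealize_not, grealize_eqF] at this
      exact this.2 huv
    · intro u v huv
      have hne : u ≠ v := C.ne_of_adj huv
      have := hp (u, v) (Finset.mem_univ _)
      rw [if_neg hne, grealize_inf] at this
      have h1 := this.1
      rw [if_pos huv, grealize_adjF] at h1
      exact h1


/-! ### The extension axioms -/

open Classical in
/-- Distinctness of the universally quantified tuple. -/
noncomputable def distF (m : ℕ) : Language.graph.Formula (Fin m) :=
  iInfS Finset.univ fun q : Fin m × Fin m =>
    if q.1 = q.2 then ⊤ else (eqF q.1 q.2).not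

lemma grealize_distF (p : Fin m → V) :
    GRealize G (distF m) p ↔ Function.Injective p := by
  rw [distF, grealize_iInf]
  constructor
  · intro h a b hab
    by_contra hne
    have := h (a, b) (Finset.mem_univ _)
    rw [if_neg hne, grealize_not, grealize_eqF] at this
    exact this hab
  · intro h q _
    by_cases hq : q.1 = q.2
    · rw [if_pos hq]; exact grealize_top G _
    · rw [if_neg hq, grealize_not, grealize_eqF]
      exact fun hh => hq (h hh)

open Classical in
/-- The conclusion of an extension axiom: the new points realize the required pattern. -/
noncomputable def psiF (m k : ℕ) (Eb : Fin m ⊕ Fin k → Fin m ⊕ Fin k → Bool) :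
    Language.graph.Formula (Fin m ⊕ Fin k) :=
  iInfS Finset.univ fun q : (Fin m ⊕ Fin k) × (Fin m ⊕ Fin k) =>
    match q with
    | (.inl i, .inr j) => (eqF (Sum.inl i) (Sum.inr j)).not ⊓
        (if Es Eb (.inl i) (.inr j) = true then adjF (Sum.inl i) (Sum.inr j)
         else (adjF (Sum.inl i) (Sum.inr j)).not)
    | (.inr j, .inr j') =>
        if j = j' then ⊤
        else ((eqF (Sum.inr j) (Sum.inr j')).not ⊓
          (if Es Eb (.inr j) (.inr j') = true then adjF (Sum.inr j) (Sum.inr j')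
           else (adjF (Sum.inr j) (Sum.inr j')).not))
    | _ => ⊤

lemma grealize_psiF (Eb : Fin m ⊕ Fin k → Fin m ⊕ Fin k → Bool) (p : Fin m → V)
    (y : Fin k → V) :
    GRealize G (psiF m k Eb) (Sum.elim p y) ↔
      ((∀ i j, p i ≠ y j ∧ (G.Adj (p i) (y j) ↔ Es Eb (.inl i) (.inr j) = true)) ∧
        ∀ j j', j ≠ j' →
          (y j ≠ y j' ∧ (G.Adj (y j) (y j') ↔ Es Eb (.inr j) (.inr j') = true))) := by
  rw [psiF, grealize_iInf]
  constructor
  · intro h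
    constructor
    · intro i j
      have := h (Sum.inl i, Sum.inr j) (Finset.mem_univ _)
      dsimp only at this
      rw [grealize_inf, grealize_not, grealize_eqF] at this
      refine ⟨this.1, ?_⟩
      have h2 := this.2
      by_cases hE : Es Eb (.inl i) (.inr j) = true
      · rw [if_pos hE, grealize_adjF] at h2
        simp only [Sum.elim_inl, Sum.elim_inr] at h2
        exact ⟨fun _ => hE, fun _ => h2⟩
      · rw [if_neg hE, grealize_not, grealize_adjF] at h2
        simp only [Sum.elim_inl, Sum.elim_inr] at h2
        exact ⟨fun ha => absurd ha h2, fun hE' => absurd hE' hE⟩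
    · intro j j' hjj
      have := h (Sum.inr j, Sum.inr j') (Finset.mem_univ _)
      dsimp only at this
      rw [if_neg hjj, grealize_inf, grealize_not, grealize_eqF] at this
      refine ⟨this.1, ?_⟩
      have h2 := this.2
      by_cases hE : Es Eb (.inr j) (.inr j') = true
      · rw [if_pos hE, grealize_adjF] at h2
        simp only [Sum.elim_inr] at h2
        exact ⟨fun _ => hE, fun _ => h2⟩
      · rw [if_neg hE, grealize_not, grealize_adjF] at h2
        simp only [Sum.elim_inr] at h2
        exact ⟨fun ha => absurd ha h2, fun hE' => absurd hE' hE⟩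
  · rintro ⟨h1, h2⟩ q _
    rcases q with ⟨i | j, i' | j'⟩ <;> dsimp only
    · exact grealize_top G _
    · rw [grealize_inf, grealize_not, grealize_eqF]
      refine ⟨(h1 i j').1, ?_⟩
      by_cases hE : Es Eb (.inl i) (.inr j') = true
      · rw [if_pos hE, grealize_adjF]
        simp only [Sum.elim_inl, Sum.elim_inr]
        exact (h1 i j').2.mpr hE
      · rw [if_neg hE, grealize_not, grealize_adjF]
        simp only [Sum.elim_inl, Sum.elim_inr]
        exact fun ha => hE ((h1 i j').2.mp ha)
    · exact grealize_top G _
    · by_cases hjj : j = j'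
      · rw [if_pos hjj]; exact grealize_top G _
      · rw [if_neg hjj, grealize_inf, grealize_not, grealize_eqF]
        refine ⟨(h2 j j' hjj).1, ?_⟩
        by_cases hE : Es Eb (.inr j) (.inr j') = true
        · rw [if_pos hE, grealize_adjF]
          simp only [Sum.elim_inr]
          exact (h2 j j' hjj).2.mpr hE
        · rw [if_neg hE, grealize_not, grealize_adjF]
          simp only [Sum.elim_inr]
          exact fun ha => hE ((h2 j j' hjj).2.mp ha)

/-- The extension axiom for the pattern `(m, k, Eb)`. -/
noncomputable def extAxiom {ι : Type} [Finite ι] {nn : ι → ℕ}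
    (𝒞 : ∀ i, SimpleGraph (Fin (nn i))) (m k : ℕ)
    (Eb : Fin m ⊕ Fin k → Fin m ⊕ Fin k → Bool) : Language.graph.Sentence :=
  iAllsF (Sum.inr : Fin m → Empty ⊕ Fin m)
    ((distF m ⊓ chi 𝒞 m k Eb).imp
      (iExsF (id : Fin m ⊕ Fin k → Fin m ⊕ Fin k) (psiF m k Eb)))

lemma gsat_extAxiom {ι : Type} [Finite ι] {nn : ι → ℕ} (𝒞 : ∀ i, SimpleGraph (Fin (nn i)))
    (Eb : Fin m ⊕ Fin k → Fin m ⊕ Fin k → Bool) :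
    GSat G (extAxiom 𝒞 m k Eb) ↔
      ∀ p : Fin m → V, Function.Injective p → CFree 𝒞 (PG G Eb p) →
        ∃ y : Fin k → V,
          (∀ i j, p i ≠ y j ∧ (G.Adj (p i) (y j) ↔ Es Eb (.inl i) (.inr j) = true)) ∧
          ∀ j j', j ≠ j' →
            (y j ≠ y j' ∧ (G.Adj (y j) (y j') ↔ Es Eb (.inr j) (.inr j') = true)) := by
  rw [extAxiom, gsat_iAlls]
  apply forall_congr'
  intro p
  rw [grealize_imp, grealize_inf, grealize_distF, grealize_chi]
  constructor
  · intro h hinj hfree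
    obtain ⟨y, hy⟩ := (grealize_iExs G _ _ _).mp (h ⟨hinj, hfree⟩)
    rw [show (fun a => Sum.elim p y (id a)) = Sum.elim p y from rfl, grealize_psiF] at hy
    exact ⟨y, hy⟩
  · rintro h ⟨hinj, hfree⟩
    obtain ⟨y, hy⟩ := h hinj hfree
    rw [grealize_iExs]
    exact ⟨y, by
      rw [show (fun a => Sum.elim p y (id a)) = Sum.elim p y from rfl, grealize_psiF]
      exact hy⟩

/-! ### Soundness: the axioms hold in every member of `E_𝒞` -/

lemma extAxiom_mem {ι : Type} [Finite ι] {nn : ι → ℕ} (𝒞 : ∀ i, SimpleGraph (Fin (nn i)))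
    (m k : ℕ) (Eb : Fin m ⊕ Fin k → Fin m ⊕ Fin k → Bool) :
    extAxiom 𝒞 m k Eb ∈ TheoryEC 𝒞 := by
  intro V G hG
  obtain ⟨hcnt, hfree, hec⟩ := hG
  haveI : Countable V := hcnt
  rw [gsat_extAxiom]
  intro p hp hPG
  classical
  have hext := hec (V ⊕ Fin k) (PG G Eb p) inferInstance hPG
    ⟨⟨Sum.inl, Sum.inl_injective⟩, Iff.rfl⟩
  set A : Finset V := Finset.univ.image p with hA
  set B : Finset (V ⊕ Fin k) :=
    Finset.univ.image (fun i => (Sum.inl (p i) : V ⊕ Fin k)) ∪ Finset.univ.image Sum.inr with hB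
  have hBl : ∀ i, (Sum.inl (p i) : V ⊕ Fin k) ∈ B := fun i =>
    Finset.mem_union_left _ (Finset.mem_image.mpr ⟨i, Finset.mem_univ _, rfl⟩)
  have hBr : ∀ j, (Sum.inr j : V ⊕ Fin k) ∈ B := fun j =>
    Finset.mem_union_right _ (Finset.mem_image.mpr ⟨j, Finset.mem_univ _, rfl⟩)
  obtain ⟨f, finj, ffix, fiso⟩ := hext A B (by
    intro a ha
    rw [hA] at ha
    obtain ⟨i, -, rfl⟩ := Finset.mem_image.mp ha
    exact hBl i)
  have ffix' : ∀ i, f (Sum.inl (p i)) = p i := fun i =>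
    ffix (p i) (Finset.mem_image.mpr ⟨i, Finset.mem_univ _, rfl⟩)
  refine ⟨fun j => f (Sum.inr j), ?_, ?_⟩
  · intro i j
    constructor
    · intro hpy
      have : (Sum.inl (p i) : V ⊕ Fin k) = Sum.inr j :=
        finj (hBl i) (hBr j) (by rw [ffix']; exact hpy)
      simp at this
    · have hiso := fiso _ (hBl i) _ (hBr j)
      rw [PG_adj_inl_inr] at hiso
      rw [ffix'] at hiso
      rw [← hiso]
      constructor
      · rintro ⟨i', hpi', hE⟩
        rwa [hp hpi'] at hE
      · intro hE
        exact ⟨i, rfl, hE⟩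
  · intro j j' hjj
    constructor
    · intro hyy
      have : (Sum.inr j : V ⊕ Fin k) = Sum.inr j' := finj (hBr j) (hBr j') hyy
      exact hjj (Sum.inr.inj this)
    · have hiso := fiso _ (hBr j) _ (hBr j')
      rw [PG_adj_inr_inr] at hiso
      rw [← hiso]
      exact ⟨fun h => h.2, fun h => ⟨hjj, h⟩⟩

lemma freeSent_mem {ι : Type} [Finite ι] {nn : ι → ℕ} (𝒞 : ∀ i, SimpleGraph (Fin (nn i)))
    (l : ι) : freeSent (nn l) (𝒞 l) ∈ TheoryEC 𝒞 :=
  fun _ G hG => (gsat_freeSent G (𝒞 l)).mpr (hG.2.1 l)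

end StmtAux


open FirstOrder SimpleGraph in
/-- a countable graph `M` is a model of `T*_𝒞` iff `M ∈ E_𝒞`. -/
theorem stmt_0 {ι : Type} [Finite ι] {nn : ι → ℕ} (𝒞 : ∀ i, SimpleGraph (Fin (nn i)))
    (V : Type) [Countable V] (M : SimpleGraph V) :
    (∀ φ ∈ TheoryEC 𝒞, GSat M φ) ↔ InEC 𝒞 M := by
  constructor
  · intro hM
    refine ⟨inferInstance, fun l => (StmtAux.gsat_freeSent M (𝒞 l)).mp
      (hM _ (StmtAux.freeSent_mem 𝒞 l)), ?_⟩
    intro W H cW cH e A B hAB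
    classical
    by_cases hW : IsEmpty W
    · refine ⟨fun w => (hW.false w).elim, ?_, ?_, ?_⟩
      · intro u hu; exact (hW.false u).elim
      · intro a ha; exact (hW.false (e a)).elim
      · intro u hu; exact (hW.false u).elim
    by_cases hV : IsEmpty V
    · exfalso
      obtain ⟨w0⟩ := not_isEmpty_iff.mp hW
      have hsat := hM _ (StmtAux.extAxiom_mem 𝒞 0 1 (fun _ _ => false))
      rw [StmtAux.gsat_extAxiom] at hsat
      have hinj0 : Function.Injective (fun i : Fin 0 => (i.elim0 : V)) := fun a => a.elim0
      have hfree0 : CFree 𝒞 (StmtAux.PG (k := 1) M (fun _ _ => false)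
          (fun i : Fin 0 => (i.elim0 : V))) := by
        intro l hsub
        obtain ⟨f, hf⟩ := hsub
        apply cH l
        have hall : ∀ u1 : Fin (nn l), f u1 = Sum.inr 0 := by
          intro u1
          rcases hfu : f u1 with v | j
          · exact (hV.false v).elim
          · exact congrArg Sum.inr (Subsingleton.elim j 0)
        refine ⟨⟨fun _ => w0, ?_⟩, ?_⟩
        · intro a b _
          exact f.injective (by rw [hall a, hall b])
        · intro u1 v1 huv
          have h2 := hf u1 v1 huv
          rw [hall u1, hall v1] at h2
          exact absurd rfl h2.1
      obtain ⟨y, -, -⟩ := hsat _ hinj0 hfree0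
      exact (hV.false (y 0)).elim
    -- main case
    haveI : Nonempty V := not_isEmpty_iff.mp hV
    set Bx : Finset W := B.filter (fun w => ∃ a : V, e a = w) with hBxdef
    set Bn : Finset W := B.filter (fun w => ¬ ∃ a : V, e a = w) with hBndef
    set m := Bx.card with hm
    set k := Bn.card with hk
    set ex : Fin m → W := fun i => ((Bx.equivFin.symm i : Bx) : W) with hexdef
    set bb : Fin k → W := fun j => ((Bn.equivFin.symm j : Bn) : W) with hbbdef
    have hex_mem : ∀ i, ex i ∈ Bx := fun i => (Bx.equivFin.symm i).2
    have hbb_mem : ∀ j, bb j ∈ Bn := fun j => (Bn.equivFin.symm j).2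
    have hex_inj : Function.Injective ex := by
      intro a b hab
      exact Bx.equivFin.symm.injective (Subtype.ext hab)
    have hbb_inj : Function.Injective bb := by
      intro a b hab
      exact Bn.equivFin.symm.injective (Subtype.ext hab)
    have hex_surj : ∀ w ∈ Bx, ∃ i, ex i = w := by
      intro w hw
      exact ⟨Bx.equivFin ⟨w, hw⟩, by rw [hexdef]; simp⟩
    have hbb_surj : ∀ w ∈ Bn, ∃ j, bb j = w := by
      intro w hw
      exact ⟨Bn.equivFin ⟨w, hw⟩, by rw [hbbdef]; simp⟩
    have hxe : ∀ i, ∃ a : V, e a = ex i := fun i => (Finset.mem_filter.mp (hex_mem i)).2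
    have hbn : ∀ j, ¬ ∃ a : V, e a = bb j := fun j => (Finset.mem_filter.mp (hbb_mem j)).2
    have hbbB : ∀ j, bb j ∈ B := fun j => (Finset.mem_filter.mp (hbb_mem j)).1
    have hexB : ∀ i, ex i ∈ B := fun i => (Finset.mem_filter.mp (hex_mem i)).1
    set x : Fin m → V := fun i => Classical.choose (hxe i) with hxdef
    have hx : ∀ i, e (x i) = ex i := fun i => Classical.choose_spec (hxe i)
    have hx_inj : Function.Injective x := by
      intro a b hab
      apply hex_inj
      rw [← hx a, ← hx b, hab]
    set Eb : Fin m ⊕ Fin k → Fin m ⊕ Fin k → Bool := fun u v =>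
      Sum.elim
        (fun i => Sum.elim (fun _ => false)
          (fun j => if H.Adj (ex i) (bb j) then true else false) v)
        (fun j => Sum.elim (fun _ => false)
          (fun j' => if H.Adj (bb j) (bb j') then true else false) v) u
      with hEbdef
    have hEs1 : ∀ i j, StmtAux.Es Eb (.inl i) (.inr j) = true ↔ H.Adj (ex i) (bb j) := by
      intro i j
      rw [StmtAux.Es, hEbdef]
      by_cases h : H.Adj (ex i) (bb j) <;> simp [h]
    have hEs2 : ∀ j j', StmtAux.Es Eb (.inr j) (.inr j') = true ↔ H.Adj (bb j) (bb j') := by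
      intro j j'
      rw [StmtAux.Es, hEbdef]
      by_cases h : H.Adj (bb j) (bb j')
      · simp [h]
      · have h' : ¬ H.Adj (bb j') (bb j) := fun hh => h hh.symm
        simp [h, h']
    have hsat := hM _ (StmtAux.extAxiom_mem 𝒞 m k Eb)
    rw [StmtAux.gsat_extAxiom] at hsat
    have hfreePG : CFree 𝒞 (StmtAux.PG M Eb x) := by
      intro l hsub
      obtain ⟨f, hf⟩ := hsub
      apply cH l
      refine ⟨⟨fun u => Sum.elim (fun a => e a) bb (f u), ?_⟩, ?_⟩
      · intro a b hab
        have hab' : Sum.elim (fun a0 => (e a0 : W)) bb (f a)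
            = Sum.elim (fun a0 => (e a0 : W)) bb (f b) := hab
        apply f.injective
        rcases hfa : f a with va | ja <;> rcases hfb : f b with vb | jb <;>
          rw [hfa, hfb] at hab' <;> simp only [Sum.elim_inl, Sum.elim_inr] at hab'
        · rw [e.injective hab']
        · exact absurd ⟨va, hab'⟩ (hbn jb)
        · exact absurd ⟨vb, hab'.symm⟩ (hbn ja)
        · rw [hbb_inj hab']
      · intro u v huv
        have h2 := hf u v huv
        show H.Adj (Sum.elim (fun a0 => (e a0 : W)) bb (f u))
          (Sum.elim (fun a0 => (e a0 : W)) bb (f v))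
        rcases hfu : f u with vu | ju <;> rcases hfv : f v with vv | jv <;>
          rw [hfu, hfv] at h2 <;>
          simp only [Sum.elim_inl, Sum.elim_inr]
        · exact e.map_rel_iff.mpr h2
        · obtain ⟨i, hpi, hE⟩ := h2
          rw [← hpi, hx i]
          exact (hEs1 i jv).mp hE
        · obtain ⟨i, hpi, hE⟩ := h2
          rw [← hpi, hx i]
          exact ((hEs1 i ju).mp hE).symm
        · exact (hEs2 ju jv).mp h2.2
    obtain ⟨y, P1, P2⟩ := hsat x hx_inj hfreePG
    set f : W → V := fun w =>
      if h : ∃ j, bb j = w then y (Classical.choose h)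
      else if h' : ∃ i, ex i = w then x (Classical.choose h')
      else Classical.arbitrary V
      with hfdef
    have f_bb : ∀ j, f (bb j) = y j := by
      intro j
      simp only [hfdef]
      have hj : ∃ j', bb j' = bb j := ⟨j, rfl⟩
      rw [dif_pos hj]
      exact congrArg y (hbb_inj (Classical.choose_spec hj))
    have f_ex : ∀ i, f (ex i) = x i := by
      intro i
      simp only [hfdef]
      have hno : ¬ ∃ j, bb j = ex i := by
        rintro ⟨j, hj⟩
        exact hbn j ⟨x i, by rw [hx i]; exact hj.symm⟩
      rw [dif_neg hno]
      have hi : ∃ i', ex i' = ex i := ⟨i, rfl⟩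
      rw [dif_pos hi]
      exact congrArg x (hex_inj (Classical.choose_spec hi))
    have hcover : ∀ w ∈ B, (∃ j, bb j = w) ∨ (∃ i, ex i = w) := by
      intro w hw
      by_cases hr : ∃ a : V, e a = w
      · exact Or.inr (hex_surj w (Finset.mem_filter.mpr ⟨hw, hr⟩))
      · exact Or.inl (hbb_surj w (Finset.mem_filter.mpr ⟨hw, hr⟩))
    refine ⟨f, ?_, ?_, ?_⟩
    · intro u hu v hv hfu
      rcases hcover u hu with ⟨j, rfl⟩ | ⟨i, rfl⟩ <;>
        rcases hcover v hv with ⟨j', rfl⟩ | ⟨i', rfl⟩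
      · rw [f_bb, f_bb] at hfu
        by_contra hne
        have hjj : j ≠ j' := fun h => hne (congrArg bb h)
        exact (P2 j j' hjj).1 hfu
      · rw [f_bb, f_ex] at hfu
        exact absurd hfu.symm (P1 i' j).1
      · rw [f_ex, f_bb] at hfu
        exact absurd hfu (P1 i j').1
      · rw [f_ex, f_ex] at hfu
        rw [hx_inj hfu]
    · intro a ha
      have haBx : e a ∈ Bx := Finset.mem_filter.mpr ⟨hAB a ha, ⟨a, rfl⟩⟩
      obtain ⟨i, hi⟩ := hex_surj _ haBx
      rw [← hi, f_ex]
      apply e.injective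
      rw [hx i]
      exact hi
    · intro u hu v hv
      rcases hcover u hu with ⟨j, rfl⟩ | ⟨i, rfl⟩ <;>
        rcases hcover v hv with ⟨j', rfl⟩ | ⟨i', rfl⟩
      · rw [f_bb, f_bb]
        by_cases hjj : j = j'
        · subst hjj
          simp [SimpleGraph.irrefl]
        · rw [(P2 j j' hjj).2, hEs2]
      · rw [f_bb, f_ex]
        rw [H.adj_comm (bb j) (ex i'), M.adj_comm (y j) (x i'), (P1 i' j).2, hEs1]
      · rw [f_ex, f_bb]
        rw [(P1 i j').2, hEs1]
      · rw [f_ex, f_ex]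
        rw [← hx i, ← hx i']
        exact e.map_rel_iff
  · intro h φ hφ
    exact hφ V M h
end

section
/- Let 𝒞 be a finite set of finite connected graphs. If there is a universal countable 𝒞-free graph, then the set of isomorphism types of graphs of the form G[acl_G(A)] (the subgraph of G induced on acl_G(A)), where G ranges over E_𝒞 and A over finite subsets of V(G), is countable. -/
open FirstOrder SimpleGraph

lemma term_eq_var {β : Type*} (t : Language.graph.Term β) : ∃ i, t = Language.Term.var i := by
  cases t with
  | var i => exact ⟨i, rfl⟩
  | func F ts => exact isEmptyElim F

lemma qf_transfer {V W α : Type} (G : SimpleGraph V) (H : SimpleGraph W) {k : ℕ}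
    {ψ : Language.graph.BoundedFormula α k} (hqf : ψ.IsQF)
    (f : V → W) (S : Set V) (hinj : Set.InjOn f S)
    (hadj : ∀ u ∈ S, ∀ v ∈ S, (G.Adj u v ↔ H.Adj (f u) (f v)))
    (v : α → V) (xs : Fin k → V) (hv : ∀ i, v i ∈ S) (hxs : ∀ i, xs i ∈ S) :
    (letI := G.structure; ψ.Realize v xs) ↔ (letI := H.structure; ψ.Realize (f ∘ v) (f ∘ xs)) := by
  letI := G.structure
  letI := H.structure
  have hmem : ∀ i : α ⊕ Fin k, Sum.elim v xs i ∈ S := by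
    rintro (i | i)
    · exact hv i
    · exact hxs i
  have helim : (f ∘ Sum.elim v xs) = Sum.elim (f ∘ v) (f ∘ xs) := by
    funext i; cases i <;> rfl
  induction hqf with
  | falsum => exact Iff.rfl
  | of_isAtomic h =>
    cases h with
    | equal t₁ t₂ =>
      obtain ⟨i₁, rfl⟩ := term_eq_var t₁
      obtain ⟨i₂, rfl⟩ := term_eq_var t₂
      simp only [Language.BoundedFormula.realize_bdEqual, Language.Term.realize_var, ← helim,
        Function.comp_apply]
      exact ⟨fun h => h ▸ rfl, fun h => hinj (hmem i₁) (hmem i₂) h⟩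
    | @rel n R ts =>
      match n, R with
      | 2, .adj =>
        obtain ⟨i₁, h₁⟩ := term_eq_var (ts 0)
        obtain ⟨i₂, h₂⟩ := term_eq_var (ts 1)
        have hts : ts = ![ts 0, ts 1] := by
          funext i; fin_cases i <;> rfl
        rw [hts, h₁, h₂]
        show G.Adj (Sum.elim v xs i₁) (Sum.elim v xs i₂) ↔
          H.Adj (Sum.elim (f ∘ v) (f ∘ xs) i₁) (Sum.elim (f ∘ v) (f ∘ xs) i₂)
        rw [← helim]
        exact hadj _ (hmem i₁) _ (hmem i₂)
  | imp _ _ ih₁ ih₂ =>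
    exact imp_congr ih₁ ih₂

lemma GRealize_exs {V : Type} {G : SimpleGraph V} {α : Type} {k : ℕ}
    {ψ : Language.graph.BoundedFormula α k} {v : α → V} :
    GRealize G ψ.exs v ↔ ∃ xs : Fin k → V, (letI := G.structure; ψ.Realize v xs) := by
  letI := G.structure
  exact Language.BoundedFormula.realize_exs

lemma push_lemma {V W : Type} {G : SimpleGraph V} {H : SimpleGraph W} (e : G ↪g H)
    {α : Type} {k : ℕ} {ψ : Language.graph.BoundedFormula α k} (hqf : ψ.IsQF)
    {v : α → V} (h : GRealize G ψ.exs v) : GRealize H ψ.exs (⇑e ∘ v) := by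
  obtain ⟨xs, hxs⟩ := GRealize_exs.mp h
  refine GRealize_exs.mpr ⟨⇑e ∘ xs, ?_⟩
  refine (qf_transfer G H hqf e Set.univ (e.injective.injOn)
    (fun u _ v _ => (e.map_adj_iff).symm) v xs (fun _ => trivial) (fun _ => trivial)).mp hxs

lemma pull_lemma {V W : Type} {G : SimpleGraph V} {H : SimpleGraph W} {e : G ↪g H}
    (hec : ExtComplete G H e) (A : Finset V) {m k : ℕ}
    {ψ : Language.graph.BoundedFormula (Fin (m + 1)) k} (hqf : ψ.IsQF)
    (q : Fin m → V) (hq : ∀ i, q i ∈ A) (T : Finset W)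
    (hT : ∀ x ∈ T, GRealize H ψ.exs (Fin.cons x (⇑e ∘ q))) :
    ∃ f : W → V, Set.InjOn f ↑T ∧ ∀ x ∈ T, GRealize G ψ.exs (Fin.cons (f x) q) := by
  classical
  have hw : ∀ x ∈ T, ∃ xs : Fin k → W, (letI := H.structure; ψ.Realize (Fin.cons x (⇑e ∘ q)) xs) :=
    fun x hx => GRealize_exs.mp (hT x hx)
  choose w hwr using hw
  set B : Finset W := (A.image ⇑e) ∪ T ∪ T.attach.biUnion
    (fun x => Finset.image (w x x.2) Finset.univ) with hB
  have hAB : ∀ a ∈ A, e a ∈ B := by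
    intro a ha
    simp only [hB, Finset.mem_union, Finset.mem_image]
    exact Or.inl (Or.inl ⟨a, ha, rfl⟩)
  have hTB : ∀ x ∈ T, x ∈ B := by
    intro x hx
    simp only [hB, Finset.mem_union]
    exact Or.inl (Or.inr hx)
  have hWB : ∀ (x : W) (hx : x ∈ T) (i : Fin k), w x hx i ∈ B := by
    intro x hx i
    have : w x hx i ∈ T.attach.biUnion (fun x => Finset.image (w x x.2) Finset.univ) :=
      Finset.mem_biUnion.mpr ⟨⟨x, hx⟩, Finset.mem_attach _ _,
        Finset.mem_image.mpr ⟨i, Finset.mem_univ i, rfl⟩⟩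
    exact Finset.mem_union_right _ this
  obtain ⟨f, hfinj, hfA, hfadj⟩ := hec A B hAB
  refine ⟨f, hfinj.mono (fun x hx => hTB x hx), ?_⟩
  intro x hx
  have hmemv : ∀ i, (Fin.cons x (⇑e ∘ q) : Fin (m + 1) → W) i ∈ (↑B : Set W) := by
    intro i
    induction i using Fin.cases with
    | zero => simpa using hTB x hx
    | succ j => simpa using hAB (q j) (hq j)
  have := (qf_transfer H G hqf f (↑B) hfinj
    (fun u hu v hv => hfadj u hu v hv) (Fin.cons x (⇑e ∘ q)) (w x hx)
    hmemv (fun i => hWB x hx i)).mp (hwr x hx)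
  have hcons : f ∘ Fin.cons x (⇑e ∘ q) = Fin.cons (f x) q := by
    funext i
    refine Fin.cases rfl ?_ i
    intro j
    exact hfA (q j) (hq j)
  rw [hcons] at this
  exact GRealize_exs.mpr ⟨f ∘ w x hx, this⟩

lemma acl_image {V W : Type} {G : SimpleGraph V} {H : SimpleGraph W} {e : G ↪g H}
    (hec : ExtComplete G H e) (A : Finset V) [DecidableEq W] :
    ⇑e '' aclG G ↑A = aclG H ↑(A.image ⇑e) := by
  classical
  apply Set.Subset.antisymm
  · rintro _ ⟨a, ⟨m, φ, p, ⟨k, ψ, hqf, rfl⟩, hp, hfin, hreal⟩, rfl⟩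
    have hpA : ∀ i, p i ∈ A := hp
    refine ⟨m, ψ.exs, ⇑e ∘ p, ⟨k, ψ, hqf, rfl⟩, ?_, ?_, ?_⟩
    · intro i
      exact Finset.mem_coe.mpr (Finset.mem_image.mpr ⟨p i, hpA i, rfl⟩)
    · -- finiteness in H
      by_contra hinf
      have hinf : Set.Infinite {a' | GRealize H ψ.exs (Fin.cons a' (⇑e ∘ p))} := hinf
      obtain ⟨t, htsub, htcard⟩ := hinf.exists_subset_card_eq (hfin.toFinset.card + 1)
      obtain ⟨f, hfinj, hfr⟩ := pull_lemma hec A hqf p hpA t (fun x hx => htsub hx)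
      have himg : t.image f ⊆ hfin.toFinset := by
        intro y hy
        obtain ⟨x, hx, rfl⟩ := Finset.mem_image.mp hy
        exact hfin.mem_toFinset.mpr (hfr x hx)
      have : (t.image f).card = t.card := Finset.card_image_of_injOn hfinj
      have hle := Finset.card_le_card himg
      omega
    · have := push_lemma e hqf hreal
      have hc : ⇑e ∘ Fin.cons a p = Fin.cons (e a) (⇑e ∘ p) := by
        funext i; refine Fin.cases rfl (fun j => rfl) i
      rwa [hc] at this
  · rintro a' ⟨m, φ, p', ⟨k, ψ, hqf, rfl⟩, hp', hfin, hreal⟩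
    have hq : ∀ i, ∃ b, b ∈ A ∧ e b = p' i := by
      intro i
      obtain ⟨b, hb, hb'⟩ := Finset.mem_image.mp (Finset.mem_coe.mp (hp' i))
      exact ⟨b, hb, hb'⟩
    choose q hqA hqe using hq
    have hpe : p' = ⇑e ∘ q := funext fun i => (hqe i).symm
    subst hpe
    set SH : Set W := {x | GRealize H ψ.exs (Fin.cons x (⇑e ∘ q))} with hSH
    set SG : Set V := {y | GRealize G ψ.exs (Fin.cons y q)} with hSG
    have hpush : ∀ y ∈ SG, e y ∈ SH := by
      intro y hy
      have := push_lemma e hqf hy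
      have hc : ⇑e ∘ Fin.cons y q = Fin.cons (e y) (⇑e ∘ q) := by
        funext i; refine Fin.cases rfl (fun j => rfl) i
      rwa [hc] at this
    have hsub : ⇑e '' SG ⊆ SH := by
      rintro _ ⟨y, hy, rfl⟩; exact hpush y hy
    have hSGfin : SG.Finite :=
      Set.Finite.of_finite_image (hfin.subset hsub) (e.injective.injOn)
    obtain ⟨f, hfinj, hfr⟩ := pull_lemma hec A hqf q hqA hfin.toFinset
      (fun x hx => hfin.mem_toFinset.mp hx)
    have hfimg : f '' SH ⊆ SG := by
      rintro _ ⟨x, hx, rfl⟩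
      exact hfr x (hfin.mem_toFinset.mpr hx)
    have hinjSH : Set.InjOn f SH := by
      intro x hx y hy hxy
      exact hfinj (hfin.mem_toFinset.mpr hx) (hfin.mem_toFinset.mpr hy) hxy
    have hcard1 : SH.ncard ≤ SG.ncard := by
      calc SH.ncard = (f '' SH).ncard := (Set.ncard_image_of_injOn hinjSH).symm
        _ ≤ SG.ncard := Set.ncard_le_ncard hfimg hSGfin
    have hcard2 : SH.ncard ≤ (⇑e '' SG).ncard := by
      rwa [Set.ncard_image_of_injOn (e.injective.injOn)]
    have heq : ⇑e '' SG = SH := Set.eq_of_subset_of_ncard_le hsub hcard2 hfin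
    have ha' : a' ∈ SH := hreal
    rw [← heq] at ha'
    obtain ⟨b, hb, rfl⟩ := ha'
    exact ⟨b, ⟨m, ψ.exs, q, ⟨k, ψ, hqf, rfl⟩, hqA, hSGfin, hb⟩, rfl⟩


noncomputable def comap_equiv_iso {α β : Type} (Γ : SimpleGraph α) (eqv : α ≃ β) :
    Γ ≃g Γ.comap ⇑eqv.symm := by
  refine ⟨eqv, ?_⟩
  intro a b
  show Γ.Adj (eqv.symm (eqv a)) (eqv.symm (eqv b)) ↔ Γ.Adj a b
  simp

/-- if there is a universal countable `𝒞`-free graph, then the set of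
isomorphism types of graphs induced on `acl_G(A)`, for `G ∈ E_𝒞` and `A` finite, is
countable: there is a sequence of (countable) graphs realizing all such isomorphism types. -/
theorem stmt_5 {ι : Type} [Finite ι] {nn : ι → ℕ} (𝒞 : ∀ i, SimpleGraph (Fin (nn i)))
    (hconn : ∀ i, (𝒞 i).Connected) (huniv : ExistsUniversal 𝒞) :
    ∃ R : ℕ → (s : Set ℕ) × SimpleGraph ↥s,
      ∀ (V : Type) (G : SimpleGraph V), InEC 𝒞 G → ∀ A : Finset V,
        ∃ k, Nonempty (G.induce (aclG G ↑A) ≃g (R k).2) := by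
  classical
  obtain ⟨U, GU, hcU, hfreeU, hu⟩ := huniv
  haveI : Countable U := hcU
  obtain ⟨g⟩ := nonempty_embedding_nat U
  obtain ⟨h, hsurj⟩ := exists_surjective_nat (Finset U)
  refine ⟨fun n => ⟨⇑g '' aclG GU ↑(h n),
    (GU.induce (aclG GU ↑(h n))).comap
      ⇑(Equiv.Set.image ⇑g (aclG GU ↑(h n)) g.injective).symm⟩, ?_⟩
  intro V G hG A
  obtain ⟨hcV, hfree, hecall⟩ := hG
  obtain ⟨e⟩ := hu V G hcV hfree
  have hec := hecall U GU hcU hfreeU e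
  obtain ⟨k, hk⟩ := hsurj (A.image ⇑e)
  refine ⟨k, ?_⟩
  show Nonempty (G.induce (aclG G ↑A) ≃g
    (GU.induce (aclG GU ↑(h k))).comap
      ⇑(Equiv.Set.image ⇑g (aclG GU ↑(h k)) g.injective).symm)
  rw [hk]
  have hset : ⇑e '' aclG G ↑A = aclG GU ↑(A.image ⇑e) := acl_image hec A
  have hinj : Function.Injective
      (fun x : ↥(aclG G ↑A) => (⟨e ↑x, by
        rw [← hset]; exact Set.mem_image_of_mem _ x.2⟩ : ↥(aclG GU ↑(A.image ⇑e)))) := by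
    intro x y hxy
    exact Subtype.ext (e.injective (congrArg Subtype.val hxy))
  have hsurj2 : Function.Surjective
      (fun x : ↥(aclG G ↑A) => (⟨e ↑x, by
        rw [← hset]; exact Set.mem_image_of_mem _ x.2⟩ : ↥(aclG GU ↑(A.image ⇑e)))) := by
    rintro ⟨y, hy⟩
    rw [← hset] at hy
    obtain ⟨x, hx, rfl⟩ := hy
    exact ⟨⟨x, hx⟩, rfl⟩
  have iso1 : G.induce (aclG G ↑A) ≃g GU.induce (aclG GU ↑(A.image ⇑e)) := by
    refine ⟨Equiv.ofBijective _ ⟨hinj, hsurj2⟩, ?_⟩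
    intro a b
    show GU.Adj (e ↑a) (e ↑b) ↔ G.Adj ↑a ↑b
    exact e.map_adj_iff
  exact ⟨iso1.trans (comap_equiv_iso _ _)⟩
end

section
/- Let 𝒞 be a finite set of finite connected graphs. Suppose that for every C ∈ 𝒞 and every surjective homomorphism h : C → C' onto its homomorphic image, C' contains a subgraph isomorphic to some member of 𝒞. Then: (i) for every G ∈ E_𝒞 and every A ⊆ V(G), acl_G(A) = A; (ii) any two graphs belonging to E_𝒞 are isomorphic (T*_𝒞 is ℵ₀-categorical); and (iii) there is a universal countable 𝒞-free graph. -/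
open FirstOrder SimpleGraph

/-- Adjacency relation of the homomorphic image of `C` under a map `h` (the image graph has
vertex set `h(V(C))` and edges `{(h u, h v) : (u,v) ∈ E(C)}`). -/
def HomImageAdj {α V : Type} (C : SimpleGraph α) (h : α → V) (x y : V) : Prop :=
  ∃ u v, C.Adj u v ∧ h u = x ∧ h v = y

/-- Every homomorphic image of a member of `𝒞` contains a member of `𝒞` as a subgraph. -/
def HomClosed {ι : Type} {nn : ι → ℕ} (𝒞 : ∀ i, SimpleGraph (Fin (nn i))) : Prop :=
  ∀ (i : ι) (T : Type) (h : Fin (nn i) → T), Function.Surjective h →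
    (∀ u v, (𝒞 i).Adj u v → h u ≠ h v) →
    ∃ j, SubIso (𝒞 j) (SimpleGraph.fromRel (HomImageAdj (𝒞 i) h))





section S1

variable {ι : Type} {nn : ι → ℕ} {𝒞 : ∀ i, SimpleGraph (Fin (nn i))}

/-- Key lemma: if there is an adjacency-preserving map from `K` to a `𝒞`-free graph `G`,
then `K` is `𝒞`-free. -/
theorem cfree_of_map (hclosed : HomClosed 𝒞) {V U : Type} {G : SimpleGraph V}
    (hG : CFree 𝒞 G) (K : SimpleGraph U) (q : U → V)
    (hq : ∀ a b, K.Adj a b → G.Adj (q a) (q b)) : CFree 𝒞 K := by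
  intro i ⟨f, hf⟩
  set h : Fin (nn i) → V := fun a => q (f a) with hh
  have hedge : ∀ u v, (𝒞 i).Adj u v → G.Adj (h u) (h v) := fun u v huv => hq _ _ (hf u v huv)
  obtain ⟨j, g, hg⟩ := hclosed i (Set.range h) (Set.rangeFactorization h)
    Set.rangeFactorization_surjective
    (fun u v huv => by
      intro hcon
      have : h u = h v := congrArg Subtype.val hcon
      exact (hedge u v huv).ne this)
  refine hG j ⟨⟨fun a => (g a).1, fun a b hab => g.injective (Subtype.ext hab)⟩, ?_⟩
  intro u v huv
  have := hg u v huv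
  rw [SimpleGraph.fromRel_adj] at this
  obtain ⟨hne, hor⟩ := this
  rcases hor with h1 | h1
  · obtain ⟨a, b, hab, ha, hb⟩ := h1
    have ha' : h a = (g u).1 := congrArg Subtype.val ha
    have hb' : h b = (g v).1 := congrArg Subtype.val hb
    exact (by simpa [ha', hb'] using hedge a b hab : G.Adj (g u).1 (g v).1)
  · obtain ⟨a, b, hab, ha, hb⟩ := h1
    have ha' : h a = (g v).1 := congrArg Subtype.val ha
    have hb' : h b = (g u).1 := congrArg Subtype.val hb
    have := hedge a b hab
    rw [ha', hb'] at this
    exact this.symm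

/-- No adjacency-preserving map from a member of `𝒞` to a `𝒞`-free graph. -/
theorem no_hom (hclosed : HomClosed 𝒞) {V : Type} {G : SimpleGraph V}
    (hG : CFree 𝒞 G) (i : ι) (h : Fin (nn i) → V)
    (hh : ∀ u v, (𝒞 i).Adj u v → G.Adj (h u) (h v)) : False := by
  have : CFree 𝒞 (𝒞 i) := cfree_of_map hclosed hG (𝒞 i) h hh
  exact this i ⟨Function.Embedding.refl _, fun u v huv => huv⟩

/-- Monotonicity: an injective adjacency-preserving map into a `𝒞`-free graph
pulls back `𝒞`-freeness (no homclosure needed). -/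
theorem cfree_of_emb {V U : Type} {G : SimpleGraph V}
    (hG : CFree 𝒞 G) (K : SimpleGraph U) (q : U → V) (hinj : Function.Injective q)
    (hq : ∀ a b, K.Adj a b → G.Adj (q a) (q b)) : CFree 𝒞 K := by
  intro i ⟨f, hf⟩
  exact hG i ⟨⟨fun a => q (f a), fun a b hab => f.injective (hinj hab)⟩,
    fun u v huv => hq _ _ (hf u v huv)⟩

/-- Crossing edge on a cut, given a walk. -/
theorem exists_cross_edge {V : Type} {G : SimpleGraph V} (S : Set V) :
    ∀ {u v : V} (_ : G.Walk u v), u ∈ S → v ∉ S →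
      ∃ a b, G.Adj a b ∧ a ∈ S ∧ b ∉ S := by
  intro u v w
  induction w with
  | nil => intro h1 h2; exact absurd h1 h2
  | cons hadj p ih =>
    intro h1 h2
    rename_i a b c
    by_cases hb : b ∈ S
    · exact ih hb h2
    · exact ⟨a, b, hadj, h1, hb⟩

theorem conn_all_mem {k : ℕ} {C : SimpleGraph (Fin k)} (hc : C.Connected)
    (S : Set (Fin k)) (hS : ∀ a b, C.Adj a b → a ∈ S → b ∈ S) {a : Fin k} (ha : a ∈ S)
    (b : Fin k) : b ∈ S := by
  by_contra hb
  obtain ⟨x, y, hxy, hx, hy⟩ := exists_cross_edge S ((hc a b).some) ha hb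
  exact hy (hS x y hxy hx)

/-- every vertex of a connected graph on ≥ 2 vertices has a neighbor -/
theorem exists_neighbor {k : ℕ} {C : SimpleGraph (Fin k)} (hc : C.Connected)
    (h2 : 2 ≤ k) (u : Fin k) : ∃ v, C.Adj u v := by
  by_contra h
  push_neg at h
  have : ∀ b, b ∈ ({u} : Set (Fin k)) := by
    refine conn_all_mem hc {u} ?_ rfl
    intro a b hab ha
    rw [Set.mem_singleton_iff] at ha
    subst ha
    exact absurd hab (h b)
  have h0 : (⟨0, by omega⟩ : Fin k) = u := this ⟨0, by omega⟩
  have h1 : (⟨1, by omega⟩ : Fin k) = u := this ⟨1, by omega⟩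
  rw [← h1] at h0
  have : (0 : ℕ) = 1 := congrArg Fin.val h0
  omega

end S1

section S2

variable {ι : Type} {nn : ι → ℕ}

/-- A partial realization over a tuple: `S` picks out a sub-piece of `𝒞 i`, `ρ` pins some of
its vertices to positions of the tuple `x`; `RealE` says this piece can be realized in `G`
respecting the pins. -/
def RealE (𝒞 : ∀ i, SimpleGraph (Fin (nn i))) {V : Type} (G : SimpleGraph V) {n : ℕ}
    (x : Fin n → V) (i : ι) (S : Fin (nn i) → Bool) (ρ : Fin (nn i) → Option (Fin n)) : Prop :=
  ∃ c : Fin (nn i) → V, (∀ a b, S a → S b → (𝒞 i).Adj a b → G.Adj (c a) (c b)) ∧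
    (∀ a o, S a → ρ a = some o → c a = x o)

/-- The boundary of the piece (vertices of `S` with a neighbor outside) is pinned. -/
def BCov (𝒞 : ∀ i, SimpleGraph (Fin (nn i))) {n : ℕ} (i : ι) (S : Fin (nn i) → Bool)
    (ρ : Fin (nn i) → Option (Fin n)) : Prop :=
  ∀ a b, S a → ¬ S b → (𝒞 i).Adj a b → (ρ a).isSome

/-- All boundary-pinned pieces realized over `(G, x)` are realized over `(H, y)`. -/
def Tr (𝒞 : ∀ i, SimpleGraph (Fin (nn i))) {V W : Type} (G : SimpleGraph V) {n : ℕ}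
    (x : Fin n → V) (H : SimpleGraph W) (y : Fin n → W) : Prop :=
  ∀ i S ρ, BCov 𝒞 i S ρ → RealE 𝒞 G x i S ρ → RealE 𝒞 H y i S ρ

variable {𝒞 : ∀ i, SimpleGraph (Fin (nn i))}

theorem tr_nil (hconn : ∀ i, (𝒞 i).Connected) (hclosed : HomClosed 𝒞)
    {V W : Type} {G : SimpleGraph V} {H : SimpleGraph W}
    (hG : CFree 𝒞 G) (hW : Nonempty W) (x : Fin 0 → V) (y : Fin 0 → W) :
    Tr 𝒞 G x H y := by
  intro i S ρ hbc ⟨c, hc, _⟩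
  by_cases hS : ∃ a, S a
  · obtain ⟨a0, ha0⟩ := hS
    have hall : ∀ b, S b := by
      refine conn_all_mem (hconn i) {a | S a} ?_ ha0
      intro a b hab ha
      by_contra hb
      have := hbc a b ha hb hab
      rw [Option.isSome_iff_exists] at this
      obtain ⟨o, _⟩ := this
      exact o.elim0
    exact absurd (no_hom hclosed hG i c (fun u v huv => hc u v (hall u) (hall v) huv)) id
  · push_neg at hS
    obtain ⟨w0⟩ := hW
    exact ⟨fun _ => w0, fun a b ha => absurd ha (by simpa using hS a), fun a o ha => absurd ha (by simpa using hS a)⟩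

/-- The amalgam of a host graph `H` and a finite piece `Dc` of `G`, glued along the tuples
`y` (in `H`) and `x` (in `G`); the piece attaches to `H` only through the tuple. -/
def Amal {V W : Type} (H : SimpleGraph W) (G : SimpleGraph V) {n : ℕ}
    (x : Fin n → V) (y : Fin n → W) (Dc : Finset V) :
    SimpleGraph (W ⊕ {v // v ∈ Dc}) where
  Adj p q := match p, q with
    | .inl w, .inl w' => H.Adj w w'
    | .inl w, .inr d => ∃ o, w = y o ∧ G.Adj (x o) d.1
    | .inr d, .inl w => ∃ o, w = y o ∧ G.Adj (x o) d.1
    | .inr d, .inr d' => G.Adj d.1 d'.1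
  symm := by
    constructor
    rintro (w|d) (w'|d') h
    · exact h.symm
    · exact h
    · exact h
    · exact h.symm
  loopless := by
    constructor
    rintro (w|d) h
    · exact H.loopless.irrefl w h
    · exact G.loopless.irrefl d.1 h

@[simp] theorem amal_adj_ll {V W : Type} {H : SimpleGraph W} {G : SimpleGraph V} {n : ℕ}
    {x : Fin n → V} {y : Fin n → W} {Dc : Finset V} {w w' : W} :
    (Amal H G x y Dc).Adj (Sum.inl w) (Sum.inl w') ↔ H.Adj w w' := Iff.rfl

@[simp] theorem amal_adj_lr {V W : Type} {H : SimpleGraph W} {G : SimpleGraph V} {n : ℕ}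
    {x : Fin n → V} {y : Fin n → W} {Dc : Finset V} {w : W} {d : {v // v ∈ Dc}} :
    (Amal H G x y Dc).Adj (Sum.inl w) (Sum.inr d) ↔ ∃ o, w = y o ∧ G.Adj (x o) d.1 := Iff.rfl

@[simp] theorem amal_adj_rl {V W : Type} {H : SimpleGraph W} {G : SimpleGraph V} {n : ℕ}
    {x : Fin n → V} {y : Fin n → W} {Dc : Finset V} {w : W} {d : {v // v ∈ Dc}} :
    (Amal H G x y Dc).Adj (Sum.inr d) (Sum.inl w) ↔ ∃ o, w = y o ∧ G.Adj (x o) d.1 := Iff.rfl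

@[simp] theorem amal_adj_rr {V W : Type} {H : SimpleGraph W} {G : SimpleGraph V} {n : ℕ}
    {x : Fin n → V} {y : Fin n → W} {Dc : Finset V} {d d' : {v // v ∈ Dc}} :
    (Amal H G x y Dc).Adj (Sum.inr d) (Sum.inr d') ↔ G.Adj d.1 d'.1 := Iff.rfl

theorem amal_cfree (hclosed : HomClosed 𝒞)
    {V W : Type} {G : SimpleGraph V} {H : SimpleGraph W} {n : ℕ}
    {x : Fin n → V} {y : Fin n → W}
    (hG : CFree 𝒞 G) (hH : CFree 𝒞 H) (hyinj : Function.Injective y)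
    (Dc : Finset V) (htr : Tr 𝒞 H y G x) :
    CFree 𝒞 (Amal H G x y Dc) := by
  classical
  intro i ⟨f, hf⟩
  by_cases hall : ∀ a, ¬(f a).isLeft
  · -- everything maps into the `G`-side
    have hv : ∀ a, ∃ v : V, ∃ hd : v ∈ Dc, f a = Sum.inr ⟨v, hd⟩ := by
      intro a
      rcases hfa : f a with w | ⟨v0, hv0⟩
      · exact absurd (by rw [hfa]; rfl) (hall a)
      · exact ⟨v0, hv0, rfl⟩
    choose q hq1 using hv
    refine no_hom hclosed hG i q ?_
    intro u v huv
    have h1 := hf u v huv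
    obtain ⟨hu, hu2⟩ := hq1 u
    obtain ⟨hv', hv2⟩ := hq1 v
    rw [hu2, hv2] at h1
    exact h1
  · push_neg at hall
    obtain ⟨a0, ha0⟩ := hall
    have hw0 : ∃ w0 : W, True := by
      rcases hfa : f a0 with w | d
      · exact ⟨w, trivial⟩
      · rw [hfa] at ha0; simp at ha0
    obtain ⟨w0, -⟩ := hw0
    let S : Fin (nn i) → Bool := fun a => (f a).isLeft
    let c : Fin (nn i) → W := fun a => Sum.elim id (fun _ => w0) (f a)
    have hca : ∀ a w, f a = Sum.inl w → c a = w := by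
      intro a w h
      show Sum.elim id (fun _ => w0) (f a) = w
      rw [h]; rfl
    have hfc : ∀ a, S a → f a = Sum.inl (c a) := by
      intro a ha
      rcases hfa : f a with w | d
      · exact congrArg Sum.inl (hca a w hfa).symm
      · have : S a = false := by simp only [S, hfa]; rfl
        rw [this] at ha; exact absurd ha (by simp)
    have hfS : ∀ a w, f a = Sum.inl w → S a := by
      intro a w h; simp only [S, h]; rfl
    have hfnS : ∀ a d, f a = Sum.inr d → ¬ (S a = true) := by
      intro a d h; simp only [S, h]; simp
    let ρ : Fin (nn i) → Option (Fin n) :=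
      fun a => if h : ∃ o, c a = y o then some h.choose else none
    have pin_spec : ∀ a o, ρ a = some o → c a = y o := by
      intro a o h
      by_cases h2 : ∃ o, c a = y o
      · have e : ρ a = some h2.choose := dif_pos h2
        rw [e] at h
        have := h2.choose_spec
        rwa [Option.some_inj.1 h] at this
      · have e : ρ a = none := dif_neg h2
        rw [e] at h; exact absurd h (by simp)
    have pin_complete : ∀ a o, c a = y o → ρ a = some o := by
      intro a o h
      have h2 : ∃ o, c a = y o := ⟨o, h⟩
      have e : ρ a = some h2.choose := dif_pos h2
      have h3 : y h2.choose = y o := (h2.choose_spec).symm.trans h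
      exact e.trans (congrArg some (hyinj h3))
    have hbc : BCov 𝒞 i S ρ := by
      intro a b ha hb hab
      have hfb : ∃ d, f b = Sum.inr d := by
        rcases hfb : f b with w | d
        · exact absurd (hfS b w hfb) hb
        · exact ⟨d, rfl⟩
      obtain ⟨d, hd⟩ := hfb
      have h1 := hf a b hab
      rw [hfc a ha, hd] at h1
      obtain ⟨o, ho, -⟩ := h1
      rw [Option.isSome_iff_exists]
      exact ⟨o, pin_complete a o ho⟩
    have hreal : RealE 𝒞 H y i S ρ := by
      refine ⟨c, ?_, fun a o ha h => pin_spec a o h⟩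
      intro a b ha hb hab
      have h1 := hf a b hab
      rw [hfc a ha, hfc b hb] at h1
      exact h1
    obtain ⟨c', hc'hom, hc'pin⟩ := htr i S ρ hbc hreal
    let m : Fin (nn i) → V := fun a => Sum.elim (fun _ => c' a) Subtype.val (f a)
    have hmS : ∀ a, S a → m a = c' a := by
      intro a ha
      show Sum.elim (fun _ => c' a) Subtype.val (f a) = c' a
      rw [hfc a ha]; rfl
    have hmr : ∀ a d, f a = Sum.inr d → m a = d.1 := by
      intro a d h
      show Sum.elim (fun _ => c' a) Subtype.val (f a) = d.1
      rw [h]; rfl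
    refine no_hom hclosed hG i m ?_
    intro u v huv
    have hadj := hf u v huv
    rcases hfu : f u with w1 | d1 <;> rcases hfv : f v with w2 | d2
    · have hSu : S u := hfS u w1 hfu
      have hSv : S v := hfS v w2 hfv
      rw [hmS u hSu, hmS v hSv]
      exact hc'hom u v hSu hSv huv
    · have hSu : S u := hfS u w1 hfu
      rw [hfu, hfv] at hadj
      obtain ⟨o, ho, hadj2⟩ := hadj
      have hcu : c u = y o := by
        have h3 := hfc u hSu; rw [hfu] at h3
        rw [show c u = w1 from (Sum.inl.inj h3).symm]
        exact ho
      rw [hmS u hSu, hc'pin u o hSu (pin_complete u o hcu), hmr v d2 hfv]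
      exact hadj2
    · have hSv : S v := hfS v w2 hfv
      rw [hfu, hfv] at hadj
      obtain ⟨o, ho, hadj2⟩ := hadj
      have hcv : c v = y o := by
        have h3 := hfc v hSv; rw [hfv] at h3
        rw [show c v = w2 from (Sum.inl.inj h3).symm]
        exact ho
      rw [hmS v hSv, hc'pin v o hSv (pin_complete v o hcv), hmr u d1 hfu]
      exact hadj2.symm
    · rw [hfu, hfv] at hadj
      rw [hmr u d1 hfu, hmr v d2 hfv]
      exact hadj

end S2

section S3

variable {ι : Type} {nn : ι → ℕ} {𝒞 : ∀ i, SimpleGraph (Fin (nn i))}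

theorem snoc_inj {V : Type} {n : ℕ} {x : Fin n → V} {g : V}
    (hx : Function.Injective x) (hg : ∀ o, x o ≠ g) :
    Function.Injective (Fin.snoc x g : Fin (n+1) → V) := by
  intro a b hab
  induction a using Fin.lastCases with
  | last =>
    induction b using Fin.lastCases with
    | last => rfl
    | cast b =>
      rw [Fin.snoc_last, Fin.snoc_castSucc] at hab
      exact absurd hab.symm (hg b)
  | cast a =>
    induction b using Fin.lastCases with
    | last =>
      rw [Fin.snoc_last, Fin.snoc_castSucc] at hab
      exact absurd hab (hg a)
    | cast b =>
      rw [Fin.snoc_castSucc, Fin.snoc_castSucc] at hab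
      rw [hx hab]

/-- Amalgam of `G` with an abstract piece of `C` glued along pinned vertices over the
tuple `x'`. -/
def PAm {V : Type} (G : SimpleGraph V) {n k : ℕ} (x' : Fin n → V) (C : SimpleGraph (Fin k))
    (S : Fin k → Bool) (ρ : Fin k → Option (Fin n)) :
    SimpleGraph (V ⊕ {a : Fin k // S a = true ∧ ρ a = none}) where
  Adj p q := match p, q with
    | .inl v, .inl v' => G.Adj v v'
    | .inl v, .inr α => ∃ b o, C.Adj α.1 b ∧ ρ b = some o ∧ v = x' o
    | .inr α, .inl v => ∃ b o, C.Adj α.1 b ∧ ρ b = some o ∧ v = x' o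
    | .inr α, .inr β => C.Adj α.1 β.1
  symm := by
    constructor
    rintro (v|α) (v'|β) hadj
    · exact hadj.symm
    · exact hadj
    · exact hadj
    · exact hadj.symm
  loopless := by
    constructor
    rintro (v|α) hadj
    · exact G.loopless.irrefl v hadj
    · exact C.loopless.irrefl α.1 hadj

theorem extend_tuple [Finite ι] (hconn : ∀ i, (𝒞 i).Connected) (hclosed : HomClosed 𝒞)
    {V W : Type} {G : SimpleGraph V} {H : SimpleGraph W}
    (hG : InEC 𝒞 G) (hH : InEC 𝒞 H) {n : ℕ}
    {x : Fin n → V} {y : Fin n → W}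
    (hxinj : Function.Injective x) (hyinj : Function.Injective y)
    (hiso : ∀ a b, G.Adj (x a) (x b) ↔ H.Adj (y a) (y b))
    (t1 : Tr 𝒞 G x H y) (t2 : Tr 𝒞 H y G x)
    (g : V) (hg : ∀ o, x o ≠ g) :
    ∃ h : W, (∀ o, y o ≠ h) ∧
      (∀ a b, G.Adj ((Fin.snoc x g : Fin (n+1) → V) a) ((Fin.snoc x g : Fin (n+1) → V) b) ↔
        H.Adj ((Fin.snoc y h : Fin (n+1) → W) a) ((Fin.snoc y h : Fin (n+1) → W) b)) ∧
      Tr 𝒞 G (Fin.snoc x g : Fin (n+1) → V) H (Fin.snoc y h : Fin (n+1) → W) ∧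
      Tr 𝒞 H (Fin.snoc y h : Fin (n+1) → W) G (Fin.snoc x g : Fin (n+1) → V) := by
  classical
  obtain ⟨hGc, hGfree, hGec⟩ := hG
  obtain ⟨hHc, hHfree, hHec⟩ := hH
  set x' : Fin (n+1) → V := Fin.snoc x g with hx'def
  have hx'c : ∀ o : Fin n, x' o.castSucc = x o := fun o => by simp [hx'def]
  have hx'l : x' (Fin.last n) = g := by simp [hx'def]
  have hx'inj : Function.Injective x' := snoc_inj hxinj hg
  -- witnesses for all realized pieces over x'
  let Idx := (i : ι) × (Fin (nn i) → Bool) × (Fin (nn i) → Option (Fin (n+1)))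
  haveI : Finite Idx := by infer_instance
  let cw : ∀ p : Idx, Fin (nn p.1) → V := fun p =>
    if h : RealE 𝒞 G x' p.1 p.2.1 p.2.2 then h.choose else (fun _ => g)
  have cw_spec : ∀ p : Idx, (hp : RealE 𝒞 G x' p.1 p.2.1 p.2.2) →
      (∀ a b, p.2.1 a → p.2.1 b → (𝒞 p.1).Adj a b → G.Adj (cw p a) (cw p b)) ∧
      (∀ a o, p.2.1 a → p.2.2 a = some o → cw p a = x' o) := by
    intro p hp
    have e : cw p = hp.choose := dif_pos hp
    rw [e]
    exact hp.choose_spec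
  let ImageSet : Set V := ⋃ p : Idx, Set.range (cw p)
  have hIfin : ImageSet.Finite := Set.finite_iUnion (fun p => Set.finite_range _)
  have cw_mem : ∀ (p : Idx) a, cw p a ∈ ImageSet := fun p a => Set.mem_iUnion.2 ⟨p, ⟨a, rfl⟩⟩
  have hDfin : ((insert g ImageSet) \ Set.range x).Finite :=
    ((hIfin.insert g).diff)
  set Dc : Finset V := hDfin.toFinset with hDcdef
  have hgD : g ∈ Dc := by
    rw [hDcdef, Set.Finite.mem_toFinset]
    exact ⟨Set.mem_insert _ _, by simpa using fun o => hg o⟩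
  have hDx : ∀ v ∈ Dc, ∀ o, x o ≠ v := by
    intro v hv o
    rw [hDcdef, Set.Finite.mem_toFinset] at hv
    intro hcon
    exact hv.2 ⟨o, hcon⟩
  have hIDc : ∀ v, v ∈ ImageSet → v ∈ Set.range x ∨ v ∈ Dc := by
    intro v hv
    by_cases h : v ∈ Set.range x
    · exact Or.inl h
    · refine Or.inr ?_
      rw [hDcdef, Set.Finite.mem_toFinset]
      exact ⟨Set.mem_insert_of_mem _ hv, h⟩
  -- the amalgam
  set K := Amal H G x y Dc with hKdef
  have hKfree : CFree 𝒞 K := amal_cfree hclosed hGfree hHfree hyinj Dc t2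
  haveI : Countable (W ⊕ {v // v ∈ Dc}) := by infer_instance
  let e : H ↪g K := ⟨⟨Sum.inl, Sum.inl_injective⟩, Iff.rfl⟩
  have hec := hHec (W ⊕ {v // v ∈ Dc}) K inferInstance hKfree e
  set A : Finset W := Finset.image y Finset.univ with hAdef
  haveI : Fintype {v // v ∈ Dc} := by infer_instance
  set B : Finset (W ⊕ {v // v ∈ Dc}) :=
    A.image Sum.inl ∪ Finset.univ.image (fun d : {v // v ∈ Dc} => Sum.inr d) with hBdef
  obtain ⟨F, hFinj, hFid, hFiso⟩ := hec A B (by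
    intro a ha
    rw [hBdef]
    exact Finset.mem_union_left _ (Finset.mem_image_of_mem _ ha))
  have hyA : ∀ o, y o ∈ A := fun o => by
    rw [hAdef]; exact Finset.mem_image_of_mem _ (Finset.mem_univ o)
  have hinlB : ∀ o, (Sum.inl (y o) : W ⊕ {v // v ∈ Dc}) ∈ B := fun o => by
    rw [hBdef]; exact Finset.mem_union_left _ (Finset.mem_image_of_mem _ (hyA o))
  have hinrB : ∀ d : {v // v ∈ Dc}, (Sum.inr d : W ⊕ {v // v ∈ Dc}) ∈ B := fun d => by
    rw [hBdef]; exact Finset.mem_union_right _ (Finset.mem_image_of_mem _ (Finset.mem_univ d))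
  -- the map from relevant vertices of G into K
  let ψ : V → W ⊕ {v // v ∈ Dc} := fun v =>
    if h : ∃ o, x o = v then Sum.inl (y h.choose)
    else if h2 : v ∈ Dc then Sum.inr ⟨v, h2⟩ else Sum.inr ⟨g, hgD⟩
  have ψx : ∀ o, ψ (x o) = Sum.inl (y o) := by
    intro o
    have h : ∃ o2, x o2 = x o := ⟨o, rfl⟩
    have e1 : ψ (x o) = Sum.inl (y h.choose) := dif_pos h
    rw [e1, hxinj h.choose_spec]
  have ψD : ∀ v (h2 : v ∈ Dc), ψ v = Sum.inr ⟨v, h2⟩ := by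
    intro v h2
    have h : ¬∃ o, x o = v := by
      rintro ⟨o, ho⟩; exact hDx v h2 o ho
    have e1 : ψ v = if h2 : v ∈ Dc then Sum.inr ⟨v, h2⟩ else Sum.inr ⟨g, hgD⟩ := dif_neg h
    rw [e1, dif_pos h2]
  have ψg : ψ g = Sum.inr ⟨g, hgD⟩ := ψD g hgD
  have ψB : ∀ v, v ∈ Set.range x ∨ v ∈ Dc → ψ v ∈ B := by
    rintro v (⟨o, rfl⟩ | hv)
    · rw [ψx o]; exact hinlB o
    · rw [ψD v hv]; exact hinrB _
  have ψadj : ∀ v v', (v ∈ Set.range x ∨ v ∈ Dc) → (v' ∈ Set.range x ∨ v' ∈ Dc) →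
      (G.Adj v v' ↔ K.Adj (ψ v) (ψ v')) := by
    rintro v v' (⟨o, rfl⟩ | hv) (⟨o', rfl⟩ | hv')
    · rw [ψx o, ψx o']
      exact (hiso o o').trans (Iff.rfl)
    · rw [ψx o, ψD v' hv']
      constructor
      · intro hadj; exact ⟨o, rfl, hadj⟩
      · rintro ⟨o2, ho2, hadj⟩
        rwa [hyinj ho2]
    · rw [ψD v hv, ψx o']
      constructor
      · intro hadj; exact ⟨o', rfl, hadj.symm⟩
      · rintro ⟨o2, ho2, hadj⟩
        exact (by rwa [hyinj ho2] : G.Adj (x o') v).symm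
    · rw [ψD v hv, ψD v' hv']
      exact Iff.rfl
  set h : W := F (ψ g) with hhdef
  set y' : Fin (n+1) → W := Fin.snoc y h with hy'def
  have hy'c : ∀ o : Fin n, y' o.castSucc = y o := fun o => by simp [hy'def]
  have hy'l : y' (Fin.last n) = h := by simp [hy'def]
  have hyh : ∀ o, y o ≠ h := by
    intro o hcon
    have h1 : F (Sum.inl (y o)) = y o := hFid (y o) (hyA o)
    have h2 : (Sum.inl (y o) : W ⊕ {v // v ∈ Dc}) = ψ g := by
      apply hFinj (hinlB o) (by rw [ψg]; exact hinrB _)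
      rw [h1, hcon, hhdef]
    rw [ψg] at h2
    exact absurd h2 (by simp)
  have hy'inj : Function.Injective y' := snoc_inj hyinj hyh
  -- the F-image of ψ of x' equals y'
  have hFψx' : ∀ o : Fin (n+1), F (ψ (x' o)) = y' o := by
    intro o
    induction o using Fin.lastCases with
    | last => rw [hx'l, hy'l, hhdef]
    | cast o =>
      rw [hx'c o, hy'c o, ψx o]
      exact hFid (y o) (hyA o)
  have hx'mem : ∀ o : Fin (n+1), x' o ∈ Set.range x ∨ x' o ∈ Dc := by
    intro o
    induction o using Fin.lastCases with
    | last => rw [hx'l]; exact Or.inr hgD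
    | cast o => rw [hx'c o]; exact Or.inl ⟨o, rfl⟩
  -- extended induced isomorphism
  have hiso' : ∀ a b, G.Adj (x' a) (x' b) ↔ H.Adj (y' a) (y' b) := by
    intro a b
    rw [ψadj (x' a) (x' b) (hx'mem a) (hx'mem b)]
    rw [hFiso (ψ (x' a)) (ψB _ (hx'mem a)) (ψ (x' b)) (ψB _ (hx'mem b))]
    rw [hFψx' a, hFψx' b]
  -- transfer from (G, x') to (H, y')
  have t1' : Tr 𝒞 G x' H y' := by
    intro i S ρ hbc hreal
    obtain ⟨chom, cpin⟩ := cw_spec ⟨i, S, ρ⟩ hreal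
    refine ⟨fun a => F (ψ (cw ⟨i, S, ρ⟩ a)), ?_, ?_⟩
    · intro a b ha hb hab
      have hGadj : G.Adj (cw ⟨i, S, ρ⟩ a) (cw ⟨i, S, ρ⟩ b) := chom a b ha hb hab
      have hma := hIDc _ (cw_mem ⟨i, S, ρ⟩ a)
      have hmb := hIDc _ (cw_mem ⟨i, S, ρ⟩ b)
      have hK := (ψadj _ _ hma hmb).1 hGadj
      exact (hFiso _ (ψB _ hma) _ (ψB _ hmb)).1 hK
    · intro a o ha hρa
      show F (ψ (cw ⟨i, S, ρ⟩ a)) = y' o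
      rw [cpin a o ha hρa, hFψx' o]
  -- transfer from (H, y') to (G, x')
  have t2' : Tr 𝒞 H y' G x' := by
    intro i S ρ hbc hreal
    by_contra hnot
    obtain ⟨u, uhom, upin⟩ := hreal
    let Int := {a : Fin (nn i) // S a = true ∧ ρ a = none}
    let pc : Int → V → Prop := fun α v => ∃ b o, (𝒞 i).Adj α.1 b ∧ ρ b = some o ∧ v = x' o
    let L := PAm G x' (𝒞 i) S ρ
    have hLll : ∀ v v', L.Adj (Sum.inl v) (Sum.inl v') ↔ G.Adj v v' := fun _ _ => Iff.rfl
    have hLlr : ∀ v α, L.Adj (Sum.inl v) (Sum.inr α) ↔ pc α v := fun _ _ => Iff.rfl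
    have hLrl : ∀ α v, L.Adj (Sum.inr α) (Sum.inl v) ↔ pc α v := fun _ _ => Iff.rfl
    have hLrr : ∀ α β, L.Adj (Sum.inr α) (Sum.inr β) ↔ (𝒞 i).Adj α.1 β.1 := fun _ _ => Iff.rfl
    have hSmem : ∀ b₀ (β : Int), (𝒞 i).Adj β.1 b₀ → S b₀ := by
      intro b₀ β hadj
      by_contra hb₀
      have := hbc β.1 b₀ β.2.1 hb₀ hadj
      rw [β.2.2] at this
      simp at this
    have hLfree : CFree 𝒞 L := by
      intro j ⟨f, hf⟩
      let S'' : Fin (nn j) → Bool := fun a => (f a).isLeft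
      let cL : Fin (nn j) → V := fun a => Sum.elim id (fun _ => g) (f a)
      have hcL : ∀ a w, f a = Sum.inl w → cL a = w := by
        intro a w hw
        show Sum.elim id (fun _ => g) (f a) = w
        rw [hw]; rfl
      have hfS'' : ∀ a w, f a = Sum.inl w → S'' a := by
        intro a w hw; simp only [S'', hw]; rfl
      have hfc'' : ∀ a, S'' a → f a = Sum.inl (cL a) := by
        intro a ha
        rcases hfa : f a with w | α
        · exact congrArg Sum.inl (hcL a w hfa).symm
        · have : S'' a = false := by simp only [S'', hfa]; rfl
          rw [this] at ha; exact absurd ha (by simp)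
      let ρ'' : Fin (nn j) → Option (Fin (n+1)) :=
        fun a => if hh : ∃ o, cL a = x' o then some hh.choose else none
      have pin_spec'' : ∀ a o, ρ'' a = some o → cL a = x' o := by
        intro a o hh
        by_cases h2 : ∃ o, cL a = x' o
        · have e2 : ρ'' a = some h2.choose := dif_pos h2
          rw [e2] at hh
          have := h2.choose_spec
          rwa [Option.some_inj.1 hh] at this
        · have e2 : ρ'' a = none := dif_neg h2
          rw [e2] at hh; exact absurd hh (by simp)
      have pin_complete'' : ∀ a o, cL a = x' o → ρ'' a = some o := by
        intro a o hh
        have h2 : ∃ o, cL a = x' o := ⟨o, hh⟩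
        have e2 : ρ'' a = some h2.choose := dif_pos h2
        have h3 : x' h2.choose = x' o := (h2.choose_spec).symm.trans hh
        exact e2.trans (congrArg some (hx'inj h3))
      have hbc'' : BCov 𝒞 j S'' ρ'' := by
        intro a b ha hb hab
        have hfb : ∃ β, f b = Sum.inr β := by
          rcases hfb : f b with w | β
          · exact absurd (hfS'' b w hfb) hb
          · exact ⟨β, rfl⟩
        obtain ⟨β, hβ⟩ := hfb
        have h1 := hf a b hab
        rw [hfc'' a ha, hβ, hLlr] at h1
        obtain ⟨b₀, o, -, -, ho⟩ := h1
        rw [Option.isSome_iff_exists]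
        exact ⟨o, pin_complete'' a o ho⟩
      have hrealG : RealE 𝒞 G x' j S'' ρ'' := by
        refine ⟨cL, ?_, fun a o ha hh => pin_spec'' a o hh⟩
        intro a b ha hb hab
        have h1 := hf a b hab
        rw [hfc'' a ha, hfc'' b hb, hLll] at h1
        exact h1
      obtain ⟨wit, whom, wpin⟩ := t1' j S'' ρ'' hbc'' hrealG
      let m : Fin (nn j) → W := fun a => Sum.elim (fun _ => wit a) (fun α => u α.1) (f a)
      have hmS : ∀ a, S'' a → m a = wit a := by
        intro a ha
        show Sum.elim (fun _ => wit a) (fun α => u α.1) (f a) = wit a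
        rw [hfc'' a ha]; rfl
      have hmr : ∀ a α, f a = Sum.inr α → m a = u α.1 := by
        intro a α hh
        show Sum.elim (fun _ => wit a) (fun α => u α.1) (f a) = u α.1
        rw [hh]; rfl
      refine no_hom hclosed hHfree j m ?_
      intro a b hab
      have hadj := hf a b hab
      rcases hfa : f a with w1 | α <;> rcases hfb : f b with w2 | β
      · have hSa := hfS'' a w1 hfa
        have hSb := hfS'' b w2 hfb
        rw [hmS a hSa, hmS b hSb]
        exact whom a b hSa hSb hab
      · have hSa := hfS'' a w1 hfa
        rw [hfa, hfb, hLlr] at hadj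
        obtain ⟨b₀, o, hadjβ, hρb₀, hw1⟩ := hadj
        have hcLa : cL a = x' o := (hcL a w1 hfa).trans hw1
        have hwit : wit a = y' o := wpin a o hSa (pin_complete'' a o hcLa)
        have hub₀ : u b₀ = y' o := upin b₀ o (hSmem b₀ β hadjβ) hρb₀
        have := uhom β.1 b₀ β.2.1 (hSmem b₀ β hadjβ) hadjβ
        rw [hub₀] at this
        rw [hmS a hSa, hmr b β hfb, hwit]
        exact this.symm
      · have hSb := hfS'' b w2 hfb
        rw [hfa, hfb, hLrl] at hadj
        obtain ⟨b₀, o, hadjα, hρb₀, hw2⟩ := hadj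
        have hcLb : cL b = x' o := (hcL b w2 hfb).trans hw2
        have hwit : wit b = y' o := wpin b o hSb (pin_complete'' b o hcLb)
        have hub₀ : u b₀ = y' o := upin b₀ o (hSmem b₀ α hadjα) hρb₀
        have := uhom α.1 b₀ α.2.1 (hSmem b₀ α hadjα) hadjα
        rw [hub₀] at this
        rw [hmS b hSb, hmr a α hfa, hwit]
        exact this
      · rw [hfa, hfb, hLrr] at hadj
        rw [hmr a α hfa, hmr b β hfb]
        exact uhom α.1 β.1 α.2.1 β.2.1 hadj
    haveI : Countable (V ⊕ Int) := by
      haveI := hGc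
      infer_instance
    haveI : Fintype Int := Fintype.ofFinite Int
    let eG : G ↪g L := ⟨⟨Sum.inl, Sum.inl_injective⟩, Iff.rfl⟩
    set A₂ : Finset V := Finset.image x' Finset.univ with hA₂def
    set B₂ : Finset (V ⊕ Int) :=
      A₂.image Sum.inl ∪ Finset.univ.image (fun α : Int => Sum.inr α) with hB₂def
    have hx'A₂ : ∀ o, x' o ∈ A₂ := fun o => by
      rw [hA₂def]; exact Finset.mem_image_of_mem _ (Finset.mem_univ o)
    have hinlB₂ : ∀ o, (Sum.inl (x' o) : V ⊕ Int) ∈ B₂ := fun o => by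
      rw [hB₂def]; exact Finset.mem_union_left _ (Finset.mem_image_of_mem _ (hx'A₂ o))
    have hinrB₂ : ∀ α : Int, (Sum.inr α : V ⊕ Int) ∈ B₂ := fun α => by
      rw [hB₂def]; exact Finset.mem_union_right _ (Finset.mem_image_of_mem _ (Finset.mem_univ α))
    obtain ⟨F₂, hF₂inj, hF₂id, hF₂iso⟩ := hGec (V ⊕ Int) L inferInstance hLfree eG A₂ B₂ (by
      intro a ha
      rw [hB₂def]
      exact Finset.mem_union_left _ (Finset.mem_image_of_mem _ ha))
    have hF₂x' : ∀ o, F₂ (Sum.inl (x' o)) = x' o := fun o => hF₂id (x' o) (hx'A₂ o)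
    let cs : Fin (nn i) → V := fun a =>
      if hS : S a then
        (if hρ : (ρ a).isSome then x' ((ρ a).get hρ)
         else F₂ (Sum.inr ⟨a, hS, Option.not_isSome_iff_eq_none.1 hρ⟩))
      else g
    have cs_pin : ∀ a o, S a → ρ a = some o → cs a = x' o := by
      intro a o hS hρa
      have hsome : (ρ a).isSome := by rw [hρa]; rfl
      have e1 : cs a = if hρ : (ρ a).isSome then x' ((ρ a).get hρ)
          else F₂ (Sum.inr ⟨a, hS, Option.not_isSome_iff_eq_none.1 hρ⟩) := dif_pos hS
      rw [e1, dif_pos hsome]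
      congr 1
      rw [← Option.some_inj]
      rw [Option.some_get hsome, hρa]
    have cs_unpin : ∀ a (hS : S a) (hn : ρ a = none),
        cs a = F₂ (Sum.inr ⟨a, hS, hn⟩) := by
      intro a hS hn
      have hnone : ¬ (ρ a).isSome := by rw [hn]; simp
      have e1 : cs a = if hρ : (ρ a).isSome then x' ((ρ a).get hρ)
          else F₂ (Sum.inr ⟨a, hS, Option.not_isSome_iff_eq_none.1 hρ⟩) := dif_pos hS
      rw [e1, dif_neg hnone]
    refine hnot ⟨cs, ?_, fun a o hS hρa => cs_pin a o hS hρa⟩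
    intro a b ha hb hab
    rcases hρa : ρ a with _ | o <;> rcases hρb : ρ b with _ | o'
    · -- both unpinned
      rw [cs_unpin a ha hρa, cs_unpin b hb hρb]
      refine (hF₂iso _ (hinrB₂ ⟨a, ha, hρa⟩) _ (hinrB₂ ⟨b, hb, hρb⟩)).1 ?_
      rw [hLrr]
      exact hab
    · -- a unpinned, b pinned
      rw [cs_unpin a ha hρa, cs_pin b o' hb hρb]
      have hLadj : L.Adj (Sum.inr ⟨a, ha, hρa⟩) (Sum.inl (x' o')) := by
        rw [hLrl]
        exact ⟨b, o', hab, hρb, rfl⟩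
      have := (hF₂iso _ (hinrB₂ ⟨a, ha, hρa⟩) _ (hinlB₂ o')).1 hLadj
      rwa [hF₂x' o'] at this
    · -- a pinned, b unpinned
      rw [cs_pin a o ha hρa, cs_unpin b hb hρb]
      have hLadj : L.Adj (Sum.inr ⟨b, hb, hρb⟩) (Sum.inl (x' o)) := by
        rw [hLrl]
        exact ⟨a, o, hab.symm, hρa, rfl⟩
      have := (hF₂iso _ (hinrB₂ ⟨b, hb, hρb⟩) _ (hinlB₂ o)).1 hLadj
      rw [hF₂x' o] at this
      exact this.symm
    · -- both pinned
      rw [cs_pin a o ha hρa, cs_pin b o' hb hρb]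
      have hHadj := uhom a b ha hb hab
      rw [upin a o ha hρa, upin b o' hb hρb] at hHadj
      exact (hiso' o o').2 hHadj
  exact ⟨h, hyh, hiso', t1', t2'⟩

end S3

section S4

variable {ι : Type} {nn : ι → ℕ}

/-- A finite partial isomorphism with matching transfer properties. -/
structure PIso (𝒞 : ∀ i, SimpleGraph (Fin (nn i))) {V W : Type}
    (G : SimpleGraph V) (H : SimpleGraph W) where
  n : ℕ
  x : Fin n → V
  y : Fin n → W
  hx : Function.Injective x
  hy : Function.Injective y
  iso : ∀ a b, G.Adj (x a) (x b) ↔ H.Adj (y a) (y b)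
  t1 : Tr 𝒞 G x H y
  t2 : Tr 𝒞 H y G x

variable {𝒞 : ∀ i, SimpleGraph (Fin (nn i))} {V W : Type} {G : SimpleGraph V} {H : SimpleGraph W}

def PExt (p q : PIso 𝒞 G H) : Prop :=
  ∃ h : p.n ≤ q.n, (∀ o, q.x (Fin.castLE h o) = p.x o) ∧ (∀ o, q.y (Fin.castLE h o) = p.y o)

theorem pext_refl (p : PIso 𝒞 G H) : PExt p p :=
  ⟨le_refl _, fun o => rfl, fun o => rfl⟩

theorem pext_trans {p q r : PIso 𝒞 G H} (h1 : PExt p q) (h2 : PExt q r) : PExt p r := by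
  obtain ⟨hle1, hx1, hy1⟩ := h1
  obtain ⟨hle2, hx2, hy2⟩ := h2
  refine ⟨le_trans hle1 hle2, fun o => ?_, fun o => ?_⟩
  · have : Fin.castLE (le_trans hle1 hle2) o = Fin.castLE hle2 (Fin.castLE hle1 o) := rfl
    rw [this, hx2, hx1]
  · have : Fin.castLE (le_trans hle1 hle2) o = Fin.castLE hle2 (Fin.castLE hle1 o) := rfl
    rw [this, hy2, hy1]

theorem pext_extend_left [Finite ι] (hconn : ∀ i, (𝒞 i).Connected) (hclosed : HomClosed 𝒞)
    (hG : InEC 𝒞 G) (hH : InEC 𝒞 H) (p : PIso 𝒞 G H) (g : V) :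
    ∃ q : PIso 𝒞 G H, PExt p q ∧ g ∈ Set.range q.x := by
  by_cases hgx : ∃ o, p.x o = g
  · exact ⟨p, pext_refl p, hgx⟩
  · push_neg at hgx
    obtain ⟨h, hyh, hiso', t1', t2'⟩ :=
      extend_tuple hconn hclosed hG hH p.hx p.hy p.iso p.t1 p.t2 g hgx
    refine ⟨⟨p.n + 1, Fin.snoc p.x g, Fin.snoc p.y h, snoc_inj p.hx hgx, snoc_inj p.hy hyh,
      hiso', t1', t2'⟩, ⟨Nat.le_succ _, fun o => ?_, fun o => ?_⟩, ?_⟩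
    · show (Fin.snoc p.x g : Fin (p.n+1) → V) (Fin.castLE (Nat.le_succ p.n) o) = p.x o
      have : Fin.castLE (Nat.le_succ p.n) o = Fin.castSucc o := rfl
      rw [this]; simp
    · show (Fin.snoc p.y h : Fin (p.n+1) → W) (Fin.castLE (Nat.le_succ p.n) o) = p.y o
      have : Fin.castLE (Nat.le_succ p.n) o = Fin.castSucc o := rfl
      rw [this]; simp
    · exact ⟨Fin.last p.n, by simp⟩

theorem pext_extend_right [Finite ι] (hconn : ∀ i, (𝒞 i).Connected) (hclosed : HomClosed 𝒞)
    (hG : InEC 𝒞 G) (hH : InEC 𝒞 H) (p : PIso 𝒞 G H) (w : W) :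
    ∃ q : PIso 𝒞 G H, PExt p q ∧ w ∈ Set.range q.y := by
  by_cases hwy : ∃ o, p.y o = w
  · exact ⟨p, pext_refl p, hwy⟩
  · push_neg at hwy
    obtain ⟨h, hxh, hiso', t1', t2'⟩ :=
      extend_tuple hconn hclosed hH hG p.hy p.hx (fun a b => (p.iso a b).symm) p.t2 p.t1 w hwy
    refine ⟨⟨p.n + 1, Fin.snoc p.x h, Fin.snoc p.y w, snoc_inj p.hx hxh, snoc_inj p.hy hwy,
      fun a b => (hiso' a b).symm, t2', t1'⟩, ⟨Nat.le_succ _, fun o => ?_, fun o => ?_⟩, ?_⟩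
    · show (Fin.snoc p.x h : Fin (p.n+1) → V) (Fin.castLE (Nat.le_succ p.n) o) = p.x o
      have : Fin.castLE (Nat.le_succ p.n) o = Fin.castSucc o := rfl
      rw [this]; simp
    · show (Fin.snoc p.y w : Fin (p.n+1) → W) (Fin.castLE (Nat.le_succ p.n) o) = p.y o
      have : Fin.castLE (Nat.le_succ p.n) o = Fin.castSucc o := rfl
      rw [this]; simp
    · exact ⟨Fin.last p.n, by simp⟩

theorem ec_iso [Finite ι] (hconn : ∀ i, (𝒞 i).Connected) (hclosed : HomClosed 𝒞)
    (hG : InEC 𝒞 G) (hH : InEC 𝒞 H) (hVne : Nonempty V) (hWne : Nonempty W) :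
    Nonempty (G ≃g H) := by
  classical
  haveI := hG.1
  haveI := hH.1
  obtain ⟨sV, hsV⟩ := exists_surjective_nat V
  obtain ⟨sW, hsW⟩ := exists_surjective_nat W
  have stepL : ∀ (p : PIso 𝒞 G H) (g : V), ∃ q, PExt p q ∧ g ∈ Set.range q.x :=
    fun p g => pext_extend_left hconn hclosed hG hH p g
  have stepR : ∀ (p : PIso 𝒞 G H) (w : W), ∃ q, PExt p q ∧ w ∈ Set.range q.y :=
    fun p w => pext_extend_right hconn hclosed hG hH p w
  choose fL hfL1 hfL2 using stepL
  choose fR hfR1 hfR2 using stepR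
  let p0 : PIso 𝒞 G H :=
    ⟨0, Fin.elim0, Fin.elim0, fun a => a.elim0, fun a => a.elim0, fun a => a.elim0,
      tr_nil hconn hclosed hG.2.1 hWne _ _, tr_nil hconn hclosed hH.2.1 hVne _ _⟩
  let seq : ℕ → PIso 𝒞 G H := fun k => Nat.rec p0 (fun k p => fR (fL p (sV k)) (sW k)) k
  have hseq : ∀ k, seq (k+1) = fR (fL (seq k) (sV k)) (sW k) := fun k => rfl
  have hext : ∀ k, PExt (seq k) (seq (k+1)) := by
    intro k
    rw [hseq k]
    exact pext_trans (hfL1 (seq k) (sV k)) (hfR1 (fL (seq k) (sV k)) (sW k))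
  have hextLE : ∀ k m, k ≤ m → PExt (seq k) (seq m) := by
    intro k m hkm
    induction m with
    | zero =>
      have : k = 0 := Nat.le_zero.1 hkm
      subst this; exact pext_refl _
    | succ m ih =>
      rcases Nat.lt_or_ge k (m+1) with hlt | hge
      · exact pext_trans (ih (Nat.lt_succ_iff.1 hlt)) (hext m)
      · have : k = m + 1 := le_antisymm hkm hge
        subst this; exact pext_refl _
  -- coverage
  have hcovV : ∀ v, ∃ k, ∃ o : Fin (seq k).n, (seq k).x o = v := by
    intro v
    obtain ⟨k, hk⟩ := hsV v
    obtain ⟨o, ho⟩ := hfL2 (seq k) (sV k)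
    obtain ⟨hle, hx1, hy1⟩ := hfR1 (fL (seq k) (sV k)) (sW k)
    refine ⟨k + 1, Fin.castLE hle o, ?_⟩
    show (fR (fL (seq k) (sV k)) (sW k)).x (Fin.castLE hle o) = v
    rw [hx1 o]
    exact ho.trans hk
  have hcovW : ∀ w, ∃ k, ∃ o : Fin (seq k).n, (seq k).y o = w := by
    intro w
    obtain ⟨k, hk⟩ := hsW w
    obtain ⟨o, ho⟩ := hfR2 (fL (seq k) (sV k)) (sW k)
    refine ⟨k + 1, o, ?_⟩
    show (fR (fL (seq k) (sV k)) (sW k)).y o = w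
    exact ho.trans hk
  -- coherence
  have hcohV : ∀ k (o : Fin (seq k).n) k' (o' : Fin (seq k').n),
      (seq k).x o = (seq k').x o' → (seq k).y o = (seq k').y o' := by
    intro k o k' o' hxy
    obtain ⟨h1, hx1, hy1⟩ := hextLE k (max k k') (le_max_left _ _)
    obtain ⟨h2, hx2, hy2⟩ := hextLE k' (max k k') (le_max_right _ _)
    have he : (seq (max k k')).x (Fin.castLE h1 o) = (seq (max k k')).x (Fin.castLE h2 o') := by
      rw [hx1, hx2, hxy]
    have hee := (seq (max k k')).hx he
    exact ((hy1 o).symm.trans (congrArg (seq (max k k')).y hee)).trans (hy2 o')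
  have hcohW : ∀ k (o : Fin (seq k).n) k' (o' : Fin (seq k').n),
      (seq k).y o = (seq k').y o' → (seq k).x o = (seq k').x o' := by
    intro k o k' o' hxy
    obtain ⟨h1, hx1, hy1⟩ := hextLE k (max k k') (le_max_left _ _)
    obtain ⟨h2, hx2, hy2⟩ := hextLE k' (max k k') (le_max_right _ _)
    have he : (seq (max k k')).y (Fin.castLE h1 o) = (seq (max k k')).y (Fin.castLE h2 o') := by
      rw [hy1, hy2, hxy]
    have hee := (seq (max k k')).hy he
    exact ((hx1 o).symm.trans (congrArg (seq (max k k')).x hee)).trans (hx2 o')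
  choose kV oV hV using hcovV
  choose kW oW hW using hcovW
  let Φ : V → W := fun v => (seq (kV v)).y (oV v)
  let Ψ : W → V := fun w => (seq (kW w)).x (oW w)
  have ΦSpec : ∀ k (o : Fin (seq k).n), Φ ((seq k).x o) = (seq k).y o := by
    intro k o
    exact hcohV (kV ((seq k).x o)) (oV ((seq k).x o)) k o (hV ((seq k).x o))
  have ΨSpec : ∀ k (o : Fin (seq k).n), Ψ ((seq k).y o) = (seq k).x o := by
    intro k o
    exact hcohW (kW ((seq k).y o)) (oW ((seq k).y o)) k o (hW ((seq k).y o))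
  have hli : Function.LeftInverse Ψ Φ := by
    intro v
    have h1 : Φ v = (seq (kV v)).y (oV v) := rfl
    rw [h1, ΨSpec, hV]
  have hri : Function.RightInverse Ψ Φ := by
    intro w
    have h1 : Ψ w = (seq (kW w)).x (oW w) := rfl
    rw [h1, ΦSpec, hW]
  have hadj : ∀ v v', G.Adj v v' ↔ H.Adj (Φ v) (Φ v') := by
    intro v v'
    obtain ⟨h1, hx1, hy1⟩ := hextLE (kV v) (max (kV v) (kV v')) (le_max_left _ _)
    obtain ⟨h2, hx2, hy2⟩ := hextLE (kV v') (max (kV v) (kV v')) (le_max_right _ _)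
    have hv : (seq (max (kV v) (kV v'))).x (Fin.castLE h1 (oV v)) = v := by rw [hx1, hV]
    have hv' : (seq (max (kV v) (kV v'))).x (Fin.castLE h2 (oV v')) = v' := by rw [hx2, hV]
    have hmain := (seq (max (kV v) (kV v'))).iso (Fin.castLE h1 (oV v)) (Fin.castLE h2 (oV v'))
    rw [hv, hv'] at hmain
    have hΦv : Φ v = (seq (max (kV v) (kV v'))).y (Fin.castLE h1 (oV v)) := by
      rw [← ΦSpec (max (kV v) (kV v')) (Fin.castLE h1 (oV v)), hv]
    have hΦv' : Φ v' = (seq (max (kV v) (kV v'))).y (Fin.castLE h2 (oV v')) := by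
      rw [← ΦSpec (max (kV v) (kV v')) (Fin.castLE h2 (oV v')), hv']
    rw [hΦv, hΦv']
    exact hmain
  exact ⟨⟨⟨Φ, Ψ, hli, hri⟩, fun {a b} => (hadj a b).symm⟩⟩

end S4

section S5

theorem graph_term_var {β : Type} (t : Language.graph.Term β) :
    ∃ p, t = Language.Term.var p := by
  cases t with
  | var p => exact ⟨p, rfl⟩
  | func f ts => exact f.elim

theorem graph_relMap2 {V : Type} (G : SimpleGraph V)
    (R : Language.graph.Relations 2) (z : Fin 2 → V) :
    (letI := G.structure
     Language.Structure.RelMap R z) ↔ G.Adj (z 0) (z 1) := by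
  cases R
  exact Iff.rfl

theorem qf_transfer_s7 {V V' : Type} (G : SimpleGraph V) (G' : SimpleGraph V')
    {α : Type} {k : ℕ} (ψ : Language.graph.BoundedFormula α k) (hqf : ψ.IsQF)
    (w : α ⊕ Fin k → V) (w' : α ⊕ Fin k → V')
    (heq : ∀ p q, w p = w q ↔ w' p = w' q)
    (hadj : ∀ p q, G.Adj (w p) (w q) ↔ G'.Adj (w' p) (w' q)) :
    ((letI := G.structure
      ψ.Realize (fun a => w (Sum.inl a)) (fun b => w (Sum.inr b))) ↔
     (letI := G'.structure
      ψ.Realize (fun a => w' (Sum.inl a)) (fun b => w' (Sum.inr b)))) := by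
  letI := G.structure
  letI := G'.structure
  have hterm : ∀ (t : Language.graph.Term (α ⊕ Fin k)),
      ∃ p, (Language.Term.realize (Sum.elim (fun a => w (Sum.inl a)) (fun b => w (Sum.inr b))) t
            = w p) ∧
           (Language.Term.realize (Sum.elim (fun a => w' (Sum.inl a)) (fun b => w' (Sum.inr b))) t
            = w' p) := by
    intro t
    obtain ⟨p, rfl⟩ := graph_term_var t
    refine ⟨p, ?_, ?_⟩ <;> rcases p with p | p <;> rfl
  induction hqf with
  | falsum => exact Iff.rfl
  | of_isAtomic h =>
    cases h with
    | equal t₁ t₂ =>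
      rw [Language.BoundedFormula.realize_bdEqual, Language.BoundedFormula.realize_bdEqual]
      obtain ⟨p₁, h₁, h₁'⟩ := hterm t₁
      obtain ⟨p₂, h₂, h₂'⟩ := hterm t₂
      rw [h₁, h₂, h₁', h₂']
      exact heq p₁ p₂
    | rel R ts =>
      rw [Language.BoundedFormula.realize_rel, Language.BoundedFormula.realize_rel]
      cases R
      erw [graph_relMap2 G, graph_relMap2 G']
      obtain ⟨p₁, h₁, h₁'⟩ := hterm (ts 0)
      obtain ⟨p₂, h₂, h₂'⟩ := hterm (ts 1)
      rw [h₁, h₂, h₁', h₂']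
      exact hadj p₁ p₂
  | imp h1 h2 ih1 ih2 =>
    rw [Language.BoundedFormula.realize_imp, Language.BoundedFormula.realize_imp]
    exact imp_congr ih1 ih2

/-- `N` disjoint copies of a finite part `Dc` of `G`, all glued to `G` along `P`. -/
def MCopy {V : Type} (G : SimpleGraph V) (P : Set V) (N : ℕ) (Dc : Finset V) :
    SimpleGraph (V ⊕ (Fin N × {v // v ∈ Dc})) where
  Adj p q := match p, q with
    | .inl v, .inl v' => G.Adj v v'
    | .inl v, .inr d => v ∈ P ∧ G.Adj v d.2.1
    | .inr d, .inl v => v ∈ P ∧ G.Adj v d.2.1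
    | .inr d, .inr d' => d.1 = d'.1 ∧ G.Adj d.2.1 d'.2.1
  symm := by
    constructor
    rintro (v|d) (v'|d') h
    · exact h.symm
    · exact h
    · exact h
    · exact ⟨h.1.symm, h.2.symm⟩
  loopless := by
    constructor
    rintro (v|d) h
    · exact G.loopless.irrefl v h
    · exact G.loopless.irrefl d.2.1 h.2

end S5

section S6

variable {ι : Type} {nn : ι → ℕ} {𝒞 : ∀ i, SimpleGraph (Fin (nn i))}

theorem acl_triv [Finite ι] (hconn : ∀ i, (𝒞 i).Connected) (hclosed : HomClosed 𝒞)
    {V : Type} {G : SimpleGraph V} (hG : InEC 𝒞 G) (A : Set V) : aclG G A = A := by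
  classical
  obtain ⟨hGc, hGfree, hGec⟩ := hG
  haveI := hGc
  ext a
  constructor
  · rintro ⟨m, φ, p, ⟨k, ψ, hqf, rfl⟩, hpA, hfin, hreal⟩
    by_contra haA
    have hap : ∀ i2 : Fin m, p i2 ≠ a := fun i2 hc => haA (hc ▸ hpA i2)
    have hanp : a ∉ Set.range p := by rintro ⟨i2, hi2⟩; exact hap i2 hi2
    -- extract witnesses for the existential formula
    have hreal2 : ∃ xs : Fin k → V,
        (letI := G.structure; ψ.Realize (Fin.cons a p) xs) := by
      letI := G.structure
      exact Language.BoundedFormula.realize_exs.1 hreal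
    obtain ⟨xs, hxs⟩ := hreal2
    set N := hfin.toFinset.card with hNdef
    have haR : a ∈ hfin.toFinset := by rw [Set.Finite.mem_toFinset]; exact hreal
    have hDSfin : ((insert a (Set.range xs)) \ (Set.range p)).Finite :=
      ((Set.finite_range xs).insert a).diff
    set Dc : Finset V := hDSfin.toFinset with hDcdef
    have haDc : a ∈ Dc := by
      rw [hDcdef, Set.Finite.mem_toFinset]
      exact ⟨Set.mem_insert _ _, hanp⟩
    have hDcp : ∀ v ∈ Dc, v ∉ Set.range p := by
      intro v hv
      rw [hDcdef, Set.Finite.mem_toFinset] at hv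
      exact hv.2
    have hxsDc : ∀ b2, xs b2 ∈ Set.range p ∨ xs b2 ∈ Dc := by
      intro b2
      by_cases h : xs b2 ∈ Set.range p
      · exact Or.inl h
      · refine Or.inr ?_
        rw [hDcdef, Set.Finite.mem_toFinset]
        exact ⟨Set.mem_insert_of_mem _ ⟨b2, rfl⟩, h⟩
    set P : Set V := Set.range p with hPdef
    set K := MCopy G P (N+1) Dc with hKdef
    have hKfree : CFree 𝒞 K := by
      refine cfree_of_map hclosed hGfree K (Sum.elim id (fun d => d.2.1)) ?_
      rintro (v|d) (v'|d') h
      · exact h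
      · exact h.2
      · exact h.2.symm
      · exact h.2
    haveI : Countable (V ⊕ (Fin (N+1) × {v // v ∈ Dc})) := by infer_instance
    haveI : Fintype {v // v ∈ Dc} := by infer_instance
    let e : G ↪g K := ⟨⟨Sum.inl, Sum.inl_injective⟩, Iff.rfl⟩
    set Afin : Finset V := hfin.toFinset ∪ Finset.image p Finset.univ with hAfindef
    set B : Finset (V ⊕ (Fin (N+1) × {v // v ∈ Dc})) :=
      Afin.image Sum.inl ∪
        Finset.univ.image (fun q : Fin (N+1) × {v // v ∈ Dc} => Sum.inr q) with hBdef
    have hpAfin : ∀ i2, p i2 ∈ Afin := fun i2 => by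
      rw [hAfindef]
      exact Finset.mem_union_right _ (Finset.mem_image_of_mem _ (Finset.mem_univ i2))
    have haAfin : a ∈ Afin := by
      rw [hAfindef]; exact Finset.mem_union_left _ haR
    have hinlB : ∀ v ∈ Afin, (Sum.inl v : V ⊕ (Fin (N+1) × {v // v ∈ Dc})) ∈ B := by
      intro v hv
      rw [hBdef]; exact Finset.mem_union_left _ (Finset.mem_image_of_mem _ hv)
    have hinrB : ∀ q : Fin (N+1) × {v // v ∈ Dc}, (Sum.inr q : V ⊕ _) ∈ B := by
      intro q
      rw [hBdef]; exact Finset.mem_union_right _ (Finset.mem_image_of_mem _ (Finset.mem_univ q))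
    obtain ⟨F, hFinj, hFid, hFiso⟩ := hGec _ K inferInstance hKfree e Afin B
      (fun v hv => hinlB v hv)
    -- the copy maps
    let χ : Fin (N+1) → V → (V ⊕ (Fin (N+1) × {v // v ∈ Dc})) := fun c v =>
      if h : v ∈ P then Sum.inl v
      else (if h2 : v ∈ Dc then Sum.inr (c, ⟨v, h2⟩) else Sum.inr (c, ⟨a, haDc⟩))
    have χP : ∀ c v (h : v ∈ P), χ c v = Sum.inl v := fun c v h => dif_pos h
    have χD : ∀ c v (h2 : v ∈ Dc), χ c v = Sum.inr (c, ⟨v, h2⟩) := by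
      intro c v h2
      have hnP : v ∉ P := hDcp v h2
      have e1 : χ c v = if h2 : v ∈ Dc then Sum.inr (c, ⟨v, h2⟩) else Sum.inr (c, ⟨a, haDc⟩) :=
        dif_neg hnP
      rw [e1, dif_pos h2]
    have χB : ∀ c v, (v ∈ P ∨ v ∈ Dc) → χ c v ∈ B := by
      rintro c v (h | h)
      · rw [χP c v h]
        refine hinlB v ?_
        obtain ⟨i2, rfl⟩ := h
        exact hpAfin i2
      · rw [χD c v h]; exact hinrB _
    have χeq : ∀ c v v', (v ∈ P ∨ v ∈ Dc) → (v' ∈ P ∨ v' ∈ Dc) →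
        (v = v' ↔ χ c v = χ c v') := by
      rintro c v v' (h | h) (h' | h') <;>
        constructor <;> intro he
      · rw [he]
      · rw [χP c v h, χP c v' h'] at he; exact Sum.inl.inj he
      · rw [he]
      · rw [χP c v h, χD c v' h'] at he; exact absurd he (by simp)
      · rw [he]
      · rw [χD c v h, χP c v' h'] at he; exact absurd he (by simp)
      · rw [he]
      · rw [χD c v h, χD c v' h'] at he
        have := Sum.inr.inj he
        exact congrArg Subtype.val (congrArg Prod.snd this)
    have χadj : ∀ c v v', (v ∈ P ∨ v ∈ Dc) → (v' ∈ P ∨ v' ∈ Dc) →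
        (G.Adj v v' ↔ K.Adj (χ c v) (χ c v')) := by
      rintro c v v' (h | h) (h' | h')
      · rw [χP c v h, χP c v' h']
        exact Iff.rfl
      · rw [χP c v h, χD c v' h']
        exact ⟨fun hadj => ⟨h, hadj⟩, fun hadj => hadj.2⟩
      · rw [χD c v h, χP c v' h']
        exact ⟨fun hadj => ⟨h', hadj.symm⟩, fun hadj => hadj.2.symm⟩
      · rw [χD c v h, χD c v' h']
        exact ⟨fun hadj => ⟨rfl, hadj⟩, fun hadj => hadj.2⟩
    -- the base tuple and its membership
    set w0 : Fin (m+1) ⊕ Fin k → V := Sum.elim (Fin.cons a p) xs with hw0def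
    have hw0mem : ∀ j2, w0 j2 ∈ P ∨ w0 j2 ∈ Dc := by
      rintro (j2 | j2)
      · induction j2 using Fin.cases with
        | zero =>
          have : w0 (Sum.inl 0) = a := by rw [hw0def]; simp
          rw [this]; exact Or.inr haDc
        | succ i2 =>
          have : w0 (Sum.inl i2.succ) = p i2 := by rw [hw0def]; simp
          rw [this]; exact Or.inl ⟨i2, rfl⟩
      · have : w0 (Sum.inr j2) = xs j2 := rfl
        rw [this]; exact hxsDc j2
    -- for each copy index c, transfer the realization
    have hcopy : ∀ c : Fin (N+1), F (χ c a) ∈ hfin.toFinset := by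
      intro c
      have htr := qf_transfer_s7 G G ψ hqf w0 (fun j2 => F (χ c (w0 j2)))
        (by
          intro p1 q1
          constructor
          · intro he
            exact congrArg (fun t => F (χ c t)) he
          · intro he
            have he' : F (χ c (w0 p1)) = F (χ c (w0 q1)) := he
            have he2 : χ c (w0 p1) = χ c (w0 q1) :=
              hFinj (χB c _ (hw0mem p1)) (χB c _ (hw0mem q1)) he'
            exact (χeq c _ _ (hw0mem p1) (hw0mem q1)).2 he2)
        (by
          intro p1 q1
          show G.Adj (w0 p1) (w0 q1) ↔ G.Adj (F (χ c (w0 p1))) (F (χ c (w0 q1)))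
          rw [χadj c _ _ (hw0mem p1) (hw0mem q1)]
          exact hFiso _ (χB c _ (hw0mem p1)) _ (χB c _ (hw0mem q1)))
      have hreal3 : (letI := G.structure;
          ψ.Realize (fun a2 => F (χ c (w0 (Sum.inl a2)))) (fun b2 => F (χ c (w0 (Sum.inr b2))))) := by
        letI := G.structure
        exact htr.1 hxs
      have hfun : (fun a2 => F (χ c (w0 (Sum.inl a2)))) = Fin.cons (F (χ c a)) p := by
        funext a2
        induction a2 using Fin.cases with
        | zero =>
          have h1 : w0 (Sum.inl 0) = a := by rw [hw0def]; simp
          rw [h1]; simp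
        | succ i2 =>
          have h1 : w0 (Sum.inl i2.succ) = p i2 := by rw [hw0def]; simp
          rw [h1]
          have h2 : χ c (p i2) = Sum.inl (p i2) := χP c _ ⟨i2, rfl⟩
          rw [h2]
          have h3 : F (Sum.inl (p i2)) = p i2 := hFid (p i2) (hpAfin i2)
          rw [h3]
          simp
      rw [Set.Finite.mem_toFinset]
      show GRealize G (ψ.exs) (Fin.cons (F (χ c a)) p)
      letI := G.structure
      refine Language.BoundedFormula.realize_exs.2 ⟨(fun b2 => F (χ c (w0 (Sum.inr b2)))), ?_⟩
      rw [← hfun]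
      exact hreal3
    -- distinctness
    have hχa : ∀ c, χ c a = Sum.inr (c, ⟨a, haDc⟩) := fun c => χD c a haDc
    have hne : ∀ c, F (χ c a) ≠ a := by
      intro c hcon
      have h1 : F (Sum.inl a) = a := hFid a haAfin
      have h2 : χ c a = Sum.inl a := by
        apply hFinj (by rw [hχa c]; exact hinrB _) (hinlB a haAfin)
        rw [hcon, h1]
      rw [hχa c] at h2
      exact absurd h2 (by simp)
    have hinj : ∀ c c', F (χ c a) = F (χ c' a) → c = c' := by
      intro c c' hcc
      have h2 : χ c a = χ c' a :=
        hFinj (by rw [hχa c]; exact hinrB _) (by rw [hχa c']; exact hinrB _) hcc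
      rw [hχa c, hχa c'] at h2
      exact congrArg Prod.fst (Sum.inr.inj h2)
    -- cardinality contradiction
    have hcard : (N+1) ≤ (hfin.toFinset.erase a).card := by
      have h5 := Finset.card_le_card_of_injOn (s := (Finset.univ : Finset (Fin (N+1))))
        (t := hfin.toFinset.erase a) (fun c : Fin (N+1) => F (χ c a))
        (fun c _ => Finset.mem_erase.2 ⟨hne c, hcopy c⟩)
        (fun c _ c' _ hcc => hinj c c' hcc)
      simpa using h5
    rw [Finset.card_erase_of_mem haR] at hcard
    omega
  · intro haA
    have hiff : ∀ a' : V, GRealize G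
        (Language.Term.equal (Language.Term.var (0 : Fin 2)) (Language.Term.var (1 : Fin 2)))
        (Fin.cons a' (fun _ : Fin 1 => a)) ↔ a' = a := by
      intro a'
      have h1 : GRealize G
          (Language.Term.equal (Language.Term.var (0 : Fin 2)) (Language.Term.var (1 : Fin 2)))
          (Fin.cons a' (fun _ : Fin 1 => a)) ↔
          ((Fin.cons a' (fun _ : Fin 1 => a) : Fin 2 → V) 0 =
            (Fin.cons a' (fun _ : Fin 1 => a) : Fin 2 → V) 1) := by
        letI := G.structure
        exact Language.Formula.realize_equal
      rw [h1]
      have h2 : (Fin.cons a' (fun _ : Fin 1 => a) : Fin 2 → V) 0 = a' := rfl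
      have h3 : (Fin.cons a' (fun _ : Fin 1 => a) : Fin 2 → V) 1 = a := by
        have h4 : (1 : Fin 2) = (0 : Fin 1).succ := rfl
        rw [h4, Fin.cons_succ]
      rw [h2, h3]
    refine ⟨1, Language.Term.equal (Language.Term.var (0 : Fin 2)) (Language.Term.var (1 : Fin 2)),
      fun _ => a, ⟨0, Language.Term.equal (Language.Term.var (0 : Fin 2))
        (Language.Term.var (1 : Fin 2)), ?_, rfl⟩, fun _ => haA, ?_, ?_⟩
    · exact (Language.BoundedFormula.IsAtomic.equal _ _).isQF
    · refine Set.Finite.subset (Set.finite_singleton a) ?_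
      intro a' ha'
      rw [Set.mem_setOf_eq] at ha'
      rw [Set.mem_singleton_iff]
      exact (hiff a').1 ha'
    · exact (hiff a).2 rfl

end S6

section S7

variable {ι : Type} {nn : ι → ℕ}

/-- Tasks for the chain construction: a finite set of old vertices, a number of new
vertices, a pattern of edges among the new vertices, and a pattern of edges from new
vertices to old vertices. -/
def Tsk (W₀ : Type) : Type :=
  (Finset (W₀ ⊕ ℕ)) × (Σ r : ℕ, Finset (Fin r × Fin r) × Finset (Fin r × (W₀ ⊕ ℕ)))

/-- index: `inl`-vertices get 0, `inr k` gets `k+1`. -/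
def idxB {W₀ : Type} : W₀ ⊕ ℕ → ℕ := Sum.elim (fun _ => 0) (fun k => k + 1)

/-- the initial graph: `H₀` plus isolated extra vertices. -/
def initG {W₀ : Type} (H₀ : SimpleGraph W₀) : SimpleGraph (W₀ ⊕ ℕ) where
  Adj p q := match p, q with
    | .inl w, .inl w' => H₀.Adj w w'
    | _, _ => False
  symm := by
    constructor
    rintro (w|k) (w'|k') h
    · exact h.symm
    · exact h.elim
    · exact h.elim
    · exact h.elim
  loopless := by
    constructor
    rintro (w|k) h
    · exact H₀.loopless.irrefl w h
    · exact h.elim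

/-- candidate graph: add `t.2.1` new vertices starting at position `base`, with the
pattern of edges given by the task. -/
def candG {W₀ : Type} (Gr : SimpleGraph (W₀ ⊕ ℕ)) (base : ℕ) (t : Tsk W₀) :
    SimpleGraph (W₀ ⊕ ℕ) where
  Adj v w :=
    Gr.Adj v w ∨
    (∃ i2 j2 : Fin t.2.1, v = Sum.inr (base + i2) ∧ w = Sum.inr (base + j2) ∧
      i2 ≠ j2 ∧ ((i2, j2) ∈ t.2.2.1 ∨ (j2, i2) ∈ t.2.2.1)) ∨
    (∃ i2 : Fin t.2.1,
      (v = Sum.inr (base + i2) ∧ w ∈ t.1 ∧ (i2, w) ∈ t.2.2.2 ∧ idxB w ≤ base) ∨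
      (w = Sum.inr (base + i2) ∧ v ∈ t.1 ∧ (i2, v) ∈ t.2.2.2 ∧ idxB v ≤ base))
  symm := by
    constructor
    intro v w h
    rcases h with h | ⟨i2, j2, h1, h2, h3, h4⟩ | ⟨i2, h⟩
    · exact Or.inl h.symm
    · exact Or.inr (Or.inl ⟨j2, i2, h2, h1, fun hc => h3 hc.symm, h4.symm⟩)
    · exact Or.inr (Or.inr ⟨i2, h.symm⟩)
  loopless := by
    constructor
    intro v h
    rcases h with h | ⟨i2, j2, h1, h2, h3, h4⟩ | ⟨i2, h⟩
    · exact Gr.loopless.irrefl v h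
    · rw [h2] at h1
      have : (base + (j2:ℕ)) = (base + (i2:ℕ)) := Sum.inr.inj h1
      exact h3 (Fin.ext (by omega))
    · rcases h with ⟨h1, _, _, h4⟩ | ⟨h1, _, _, h4⟩ <;>
      · rw [h1] at h4
        simp [idxB] at h4

variable (𝒞 : ∀ i, SimpleGraph (Fin (nn i)))

open Classical in
/-- the chain of graphs. -/
noncomputable def stageF {W₀ : Type} (H₀ : SimpleGraph W₀) (τ : ℕ → Tsk W₀) :
    ℕ → SimpleGraph (W₀ ⊕ ℕ) × ℕ
  | 0 => (initG H₀, 0)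
  | n + 1 =>
    let s := stageF H₀ τ n
    let t := τ n
    let base := max s.2 (t.1.sup idxB)
    if CFree 𝒞 (candG s.1 base t) then (candG s.1 base t, base + t.2.1) else s

/-- the limit graph. -/
noncomputable def limitG {W₀ : Type} (H₀ : SimpleGraph W₀) (τ : ℕ → Tsk W₀) :
    SimpleGraph (W₀ ⊕ ℕ) where
  Adj v w := ∃ n, (stageF 𝒞 H₀ τ n).1.Adj v w
  symm := by constructor; rintro v w ⟨n, h⟩; exact ⟨n, h.symm⟩
  loopless := by constructor; rintro v ⟨n, h⟩; exact (stageF 𝒞 H₀ τ n).1.loopless.irrefl v h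

/-- `v` is an old vertex at a stage with `u` used new slots. -/
def OldV {W₀ : Type} (u : ℕ) : W₀ ⊕ ℕ → Prop := fun v =>
  match v with
  | .inl _ => True
  | .inr k => k < u

variable {W₀ : Type} {H₀ : SimpleGraph W₀} {τ : ℕ → Tsk W₀}

theorem candG_adj {W₀ : Type} (Gr : SimpleGraph (W₀ ⊕ ℕ)) (base : ℕ) (t : Tsk W₀)
    (v w : W₀ ⊕ ℕ) :
    (candG Gr base t).Adj v w ↔
    (Gr.Adj v w ∨
    (∃ i2 j2 : Fin t.2.1, v = Sum.inr (base + i2) ∧ w = Sum.inr (base + j2) ∧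
      i2 ≠ j2 ∧ ((i2, j2) ∈ t.2.2.1 ∨ (j2, i2) ∈ t.2.2.1)) ∨
    (∃ i2 : Fin t.2.1,
      (v = Sum.inr (base + i2) ∧ w ∈ t.1 ∧ (i2, w) ∈ t.2.2.2 ∧ idxB w ≤ base) ∨
      (w = Sum.inr (base + i2) ∧ v ∈ t.1 ∧ (i2, v) ∈ t.2.2.2 ∧ idxB v ≤ base))) := Iff.rfl

open Classical in
theorem stageF_succ {W₀ : Type} (H₀ : SimpleGraph W₀) (τ : ℕ → Tsk W₀) (n : ℕ) :
    stageF 𝒞 H₀ τ (n+1) =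
    (if CFree 𝒞 (candG (stageF 𝒞 H₀ τ n).1 (max (stageF 𝒞 H₀ τ n).2 ((τ n).1.sup idxB)) (τ n))
     then (candG (stageF 𝒞 H₀ τ n).1 (max (stageF 𝒞 H₀ τ n).2 ((τ n).1.sup idxB)) (τ n),
           max (stageF 𝒞 H₀ τ n).2 ((τ n).1.sup idxB) + (τ n).2.1)
     else stageF 𝒞 H₀ τ n) := rfl

variable {W₀ : Type} {H₀ : SimpleGraph W₀} {τ : ℕ → Tsk W₀}

theorem stage_mono_used (n : ℕ) : (stageF 𝒞 H₀ τ n).2 ≤ (stageF 𝒞 H₀ τ (n+1)).2 := by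
  rw [stageF_succ]
  split
  · simp only
    omega
  · exact le_refl _

theorem stage_mono_used_le {n m : ℕ} (h : n ≤ m) :
    (stageF 𝒞 H₀ τ n).2 ≤ (stageF 𝒞 H₀ τ m).2 := by
  induction m with
  | zero => rw [Nat.le_zero.1 h]
  | succ m ih =>
    rcases Nat.lt_or_ge n (m+1) with h1 | h1
    · exact le_trans (ih (Nat.lt_succ_iff.1 h1)) (stage_mono_used 𝒞 m)
    · rw [le_antisymm h h1]

theorem stage_isolated (n : ℕ) :
    ∀ k, (stageF 𝒞 H₀ τ n).2 ≤ k → ∀ v, ¬ (stageF 𝒞 H₀ τ n).1.Adj (Sum.inr k) v := by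
  induction n with
  | zero =>
    intro k hk v h
    cases v <;> exact h
  | succ n ih =>
    intro k hk v h
    rw [stageF_succ] at hk h
    by_cases hc : CFree 𝒞 (candG (stageF 𝒞 H₀ τ n).1
        (max (stageF 𝒞 H₀ τ n).2 ((τ n).1.sup idxB)) (τ n))
    · rw [if_pos hc] at hk h
      simp only at hk h
      rw [candG_adj] at h
      have hused : (stageF 𝒞 H₀ τ n).2 ≤ k := by
        have := le_max_left (stageF 𝒞 H₀ τ n).2 ((τ n).1.sup idxB)
        omega
      rcases h with h | ⟨i2, j2, h1, h2, h3, h4⟩ | ⟨i2, hcr⟩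
      · exact ih k hused v h
      · have : k = max (stageF 𝒞 H₀ τ n).2 ((τ n).1.sup idxB) + (i2:ℕ) := Sum.inr.inj h1
        have hi2 := i2.2
        omega
      · rcases hcr with ⟨h1, -, -, -⟩ | ⟨-, -, -, h4⟩
        · have : k = max (stageF 𝒞 H₀ τ n).2 ((τ n).1.sup idxB) + (i2:ℕ) := Sum.inr.inj h1
          have hi2 := i2.2
          omega
        · have h4' : k + 1 ≤ max (stageF 𝒞 H₀ τ n).2 ((τ n).1.sup idxB) := h4
          omega
    · rw [if_neg hc] at hk h
      exact ih k hk v h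

theorem stage_mono_adj {n : ℕ} {v w : W₀ ⊕ ℕ} (h : (stageF 𝒞 H₀ τ n).1.Adj v w) :
    (stageF 𝒞 H₀ τ (n+1)).1.Adj v w := by
  rw [stageF_succ]
  split
  · simp only
    rw [candG_adj]
    exact Or.inl h
  · exact h

theorem stage_mono_adj_le {n m : ℕ} (hnm : n ≤ m) {v w : W₀ ⊕ ℕ}
    (h : (stageF 𝒞 H₀ τ n).1.Adj v w) : (stageF 𝒞 H₀ τ m).1.Adj v w := by
  induction m with
  | zero => rwa [Nat.le_zero.1 hnm] at h
  | succ m ih =>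
    rcases Nat.lt_or_ge n (m+1) with h1 | h1
    · exact stage_mono_adj 𝒞 (ih (Nat.lt_succ_iff.1 h1))
    · rwa [le_antisymm hnm h1] at h

/-- Old vertices keep their adjacency at later stages. -/
theorem stage_stable {n : ℕ} {v w : W₀ ⊕ ℕ}
    (hv : OldV (stageF 𝒞 H₀ τ n).2 v) (hw : OldV (stageF 𝒞 H₀ τ n).2 w) (m : ℕ) (hnm : n ≤ m)
    (h : (stageF 𝒞 H₀ τ m).1.Adj v w) : (stageF 𝒞 H₀ τ n).1.Adj v w := by
  induction m with
  | zero => rwa [Nat.le_zero.1 hnm]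
  | succ m ih =>
    rcases Nat.lt_or_ge n (m+1) with h1 | h1
    · have hnm' := Nat.lt_succ_iff.1 h1
      refine ih hnm' ?_
      rw [stageF_succ] at h
      by_cases hc : CFree 𝒞 (candG (stageF 𝒞 H₀ τ m).1
          (max (stageF 𝒞 H₀ τ m).2 ((τ m).1.sup idxB)) (τ m))
      · rw [if_pos hc] at h
        simp only at h
        rw [candG_adj] at h
        have husedm := stage_mono_used_le 𝒞 hnm' (H₀ := H₀) (τ := τ)
        rcases h with h | ⟨i2, j2, h1', h2', h3', h4'⟩ | ⟨i2, hcr⟩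
        · exact h
        · rw [h1'] at hv
          simp only [OldV] at hv
          have := le_max_left (stageF 𝒞 H₀ τ m).2 ((τ m).1.sup idxB)
          omega
        · rcases hcr with ⟨h1', -, -, -⟩ | ⟨h1', -, -, -⟩
          · rw [h1'] at hv
            simp only [OldV] at hv
            have := le_max_left (stageF 𝒞 H₀ τ m).2 ((τ m).1.sup idxB)
            omega
          · rw [h1'] at hw
            simp only [OldV] at hw
            have := le_max_left (stageF 𝒞 H₀ τ m).2 ((τ m).1.sup idxB)
            omega
      · rwa [if_neg hc] at h
    · rwa [le_antisymm hnm h1]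

end S7

section S8

variable {ι : Type} {nn : ι → ℕ} {𝒞 : ∀ i, SimpleGraph (Fin (nn i))}
variable {W₀ : Type} {H₀ : SimpleGraph W₀} {τ : ℕ → Tsk W₀}

theorem initG_cfree (h2 : ∀ i, 2 ≤ nn i) (hconn : ∀ i, (𝒞 i).Connected)
    (hH₀ : CFree 𝒞 H₀) : CFree 𝒞 (initG H₀) := by
  intro i ⟨f, hf⟩
  have hl : ∀ a, ∃ wa, f a = Sum.inl wa := by
    intro a
    obtain ⟨bb, hb⟩ := exists_neighbor (hconn i) (h2 i) a
    have := hf a bb hb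
    rcases hfa : f a with w | k
    · exact ⟨w, rfl⟩
    · rw [hfa] at this
      rcases f bb with w' | k' <;> exact this.elim
  choose wv hwv using hl
  refine hH₀ i ⟨⟨wv, fun a bb hab => f.injective (by rw [hwv a, hwv bb, hab])⟩, ?_⟩
  intro u v huv
  have := hf u v huv
  rwa [hwv u, hwv v] at this

theorem stage_cfree (h2 : ∀ i, 2 ≤ nn i) (hconn : ∀ i, (𝒞 i).Connected)
    (hH₀ : CFree 𝒞 H₀) (n : ℕ) : CFree 𝒞 (stageF 𝒞 H₀ τ n).1 := by
  induction n with
  | zero => exact initG_cfree h2 hconn hH₀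
  | succ n ih =>
    rw [stageF_succ]
    split
    · next hc => exact hc
    · exact ih

theorem limit_adj_iff_stage {n : ℕ} {v w : W₀ ⊕ ℕ}
    (hv : OldV (stageF 𝒞 H₀ τ n).2 v) (hw : OldV (stageF 𝒞 H₀ τ n).2 w) :
    (limitG 𝒞 H₀ τ).Adj v w ↔ (stageF 𝒞 H₀ τ n).1.Adj v w := by
  constructor
  · rintro ⟨m, hm⟩
    rcases le_or_gt m n with h1 | h1
    · exact stage_mono_adj_le 𝒞 h1 hm
    · exact stage_stable 𝒞 hv hw m (le_of_lt h1) hm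
  · intro h1
    exact ⟨n, h1⟩

theorem limit_cfree (h2 : ∀ i, 2 ≤ nn i) (hconn : ∀ i, (𝒞 i).Connected)
    (hH₀ : CFree 𝒞 H₀) : CFree 𝒞 (limitG 𝒞 H₀ τ) := by
  classical
  intro i ⟨f, hf⟩
  set nf : Fin (nn i) × Fin (nn i) → ℕ := fun q =>
    if h : (𝒞 i).Adj q.1 q.2 then (hf q.1 q.2 h).choose else 0 with hnfdef
  set N := Finset.sup Finset.univ nf with hNdef
  refine stage_cfree (τ := τ) h2 hconn hH₀ N i ⟨f, ?_⟩
  intro u v huv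
  have h1 : nf (u, v) = (hf u v huv).choose := dif_pos huv
  have h2' := (hf u v huv).choose_spec
  rw [← h1] at h2'
  exact stage_mono_adj_le 𝒞 (Finset.le_sup (f := nf) (Finset.mem_univ (u, v))) h2'

theorem limit_inl_adj (w w' : W₀) :
    (limitG 𝒞 H₀ τ).Adj (Sum.inl w) (Sum.inl w') ↔ H₀.Adj w w' := by
  have := limit_adj_iff_stage (𝒞 := 𝒞) (H₀ := H₀) (τ := τ) (n := 0)
    (v := Sum.inl w) (w := Sum.inl w') trivial trivial
  rw [this]
  exact Iff.rfl

theorem limit_inEC [Finite ι] (h2 : ∀ i, 2 ≤ nn i) (hconn : ∀ i, (𝒞 i).Connected)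
    (hclosed : HomClosed 𝒞) (hcnt : Countable W₀) (hH₀ : CFree 𝒞 H₀)
    (hτ : Function.Surjective τ) : InEC 𝒞 (limitG 𝒞 H₀ τ) := by
  classical
  refine ⟨inferInstance, limit_cfree h2 hconn hH₀, ?_⟩
  intro W' H' hcnt' hfree' e A B hAB
  set Bnew := B \ A.image ⇑e with hBnewdef
  set r := Bnew.card with hrdef
  set b : Fin r → W' := fun i2 => (Bnew.equivFin.symm i2).1 with hbdef
  have hbmem : ∀ i2, b i2 ∈ Bnew := fun i2 => (Bnew.equivFin.symm i2).2
  have hbinj : Function.Injective b := by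
    intro i2 j2 h
    have h1 : Bnew.equivFin.symm i2 = Bnew.equivFin.symm j2 := Subtype.ext h
    exact Bnew.equivFin.symm.injective h1
  set pe : Finset (Fin r × Fin r) :=
    (Finset.univ ×ˢ Finset.univ).filter (fun q => H'.Adj (b q.1) (b q.2)) with hpedef
  set ce : Finset (Fin r × (W₀ ⊕ ℕ)) :=
    (Finset.univ ×ˢ A).filter (fun q => H'.Adj (b q.1) (e q.2)) with hcedef
  set t : Tsk W₀ := (A, ⟨r, pe, ce⟩) with htdef
  have ht1 : t.1 = A := rfl
  have ht21 : t.2.1 = r := rfl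
  have htpe : t.2.2.1 = pe := rfl
  have htce : t.2.2.2 = ce := rfl
  obtain ⟨n, hn⟩ := hτ t
  set s := stageF 𝒞 H₀ τ n with hsdef
  set base := max s.2 (t.1.sup idxB) with hbasedef
  set ν : Fin r → (W₀ ⊕ ℕ) := fun i2 => Sum.inr (base + i2) with hνdef
  have hνinj : Function.Injective ν := by
    intro i2 j2 h
    have := Sum.inr.inj h
    exact Fin.ext (by omega)
  have hνiso : ∀ (i2 : Fin r) v, ¬ s.1.Adj (ν i2) v := by
    intro i2 v
    refine stage_isolated 𝒞 n (base + i2) ?_ v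
    rw [← hsdef]
    have : s.2 ≤ base := le_max_left _ _
    omega
  have hAnotν : ∀ a ∈ A, ∀ i2 : Fin r, ν i2 ≠ a := by
    intro a ha i2 hcon
    have h1 : idxB a ≤ t.1.sup idxB := Finset.le_sup (f := idxB) (by rw [ht1]; exact ha)
    have h2' : t.1.sup idxB ≤ base := le_max_right _ _
    rw [← hcon] at h1
    have h1' : base + (i2:ℕ) + 1 ≤ t.1.sup idxB := h1
    have h2' : t.1.sup idxB ≤ base := le_max_right _ _
    omega
  have hAidx : ∀ a ∈ A, idxB a ≤ base := by
    intro a ha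
    have h1 : idxB a ≤ t.1.sup idxB := Finset.le_sup (f := idxB) (by rw [ht1]; exact ha)
    have h2' : t.1.sup idxB ≤ base := le_max_right _ _
    omega
  -- the candidate is CFree: it maps adjacency-preservingly into H'
  set q : (W₀ ⊕ ℕ) → W' := fun v => if h : ∃ i2 : Fin r, ν i2 = v then b h.choose else e v
    with hqdef
  have qν : ∀ i2, q (ν i2) = b i2 := by
    intro i2
    have h : ∃ i2', ν i2' = ν i2 := ⟨i2, rfl⟩
    have e1 : q (ν i2) = b h.choose := dif_pos h
    rw [e1, hνinj h.choose_spec]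
  have qe : ∀ v, (∀ i2, ν i2 ≠ v) → q v = e v := by
    intro v hv
    exact dif_neg (by rintro ⟨i2, hi2⟩; exact hv i2 hi2)
  have hcand : CFree 𝒞 (candG s.1 base t) := by
    refine cfree_of_map hclosed hfree' (candG s.1 base t) q ?_
    intro v w h
    rw [candG_adj] at h
    rcases h with h | ⟨i2, j2, h1, h2', h3, h4⟩ | ⟨i2, hcr⟩
    · have hvν : ∀ i2, ν i2 ≠ v := fun i2 hcon => hνiso i2 w (by rw [hcon]; exact h)
      have hwν : ∀ i2, ν i2 ≠ w := fun i2 hcon => hνiso i2 v (by rw [hcon]; exact h.symm)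
      rw [qe v hvν, qe w hwν]
      exact e.map_rel_iff.2 ⟨n, h⟩
    · rw [h1, h2']
      have hνi2 : (Sum.inr (base + (i2:ℕ)) : W₀ ⊕ ℕ) = ν i2 := rfl
      have hνj2 : (Sum.inr (base + (j2:ℕ)) : W₀ ⊕ ℕ) = ν j2 := rfl
      rw [hνi2, hνj2, qν i2, qν j2]
      rw [htpe] at h4
      rcases h4 with h4 | h4
      · exact (Finset.mem_filter.1 h4).2
      · exact ((Finset.mem_filter.1 h4).2).symm
    · rcases hcr with ⟨h1, hw1, hw2, hw3⟩ | ⟨h1, hw1, hw2, hw3⟩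
      · rw [ht1] at hw1
        rw [htce] at hw2
        have hwν : ∀ j2, ν j2 ≠ w := fun j2 => hAnotν w hw1 j2
        rw [h1]
        have hνi2 : (Sum.inr (base + (i2:ℕ)) : W₀ ⊕ ℕ) = ν i2 := rfl
        rw [hνi2, qν i2, qe w hwν]
        exact (Finset.mem_filter.1 hw2).2
      · rw [ht1] at hw1
        rw [htce] at hw2
        have hvν : ∀ j2, ν j2 ≠ v := fun j2 => hAnotν v hw1 j2
        rw [h1]
        have hνi2 : (Sum.inr (base + (i2:ℕ)) : W₀ ⊕ ℕ) = ν i2 := rfl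
        rw [hνi2, qν i2, qe v hvν]
        exact ((Finset.mem_filter.1 hw2).2).symm
  have hstep : stageF 𝒞 H₀ τ (n+1) = (candG s.1 base t, base + r) := by
    rw [stageF_succ, hn]
    rw [if_pos hcand]
  set used' := base + r with huseddef
  have hAold : ∀ a ∈ A, OldV used' a := by
    intro a ha
    rcases a with w | k
    · trivial
    · have := hAidx _ ha
      simp only [idxB, Sum.elim_inr] at this
      show k < used'
      omega
  have hνold : ∀ i2 : Fin r, OldV used' (ν i2) := by
    intro i2
    show base + (i2:ℕ) < used'
    have := i2.2
    omega
  have hMadj : ∀ v w, OldV used' v → OldV used' w →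
      ((limitG 𝒞 H₀ τ).Adj v w ↔ (candG s.1 base t).Adj v w) := by
    intro v w hv hw
    have h1 : OldV (stageF 𝒞 H₀ τ (n+1)).2 v := by rw [hstep]; exact hv
    have h2' : OldV (stageF 𝒞 H₀ τ (n+1)).2 w := by rw [hstep]; exact hw
    have := limit_adj_iff_stage (𝒞 := 𝒞) (H₀ := H₀) (τ := τ) h1 h2'
    rw [hstep] at this
    exact this
  -- the pullback map
  set f : W' → (W₀ ⊕ ℕ) := fun w' =>
    if h : ∃ a0, a0 ∈ A ∧ e a0 = w' then h.choose
    else (if h2' : w' ∈ Bnew then ν (Bnew.equivFin ⟨w', h2'⟩) else Sum.inr 0) with hfdef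
  have fid : ∀ a0 ∈ A, f (e a0) = a0 := by
    intro a0 ha0
    have h : ∃ a1, a1 ∈ A ∧ e a1 = e a0 := ⟨a0, ha0, rfl⟩
    have e1 : f (e a0) = h.choose := dif_pos h
    rw [e1]
    exact e.injective h.choose_spec.2
  have fchoose : ∀ w' (h : ∃ a0, a0 ∈ A ∧ e a0 = w'), f w' = h.choose := fun w' h => dif_pos h
  have fB : ∀ w' (hw' : w' ∈ Bnew), f w' = ν (Bnew.equivFin ⟨w', hw'⟩) := by
    intro w' hw'
    have hni : ¬ ∃ a0, a0 ∈ A ∧ e a0 = w' := by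
      rintro ⟨a0, ha0, he0⟩
      rw [hBnewdef, Finset.mem_sdiff] at hw'
      exact hw'.2 (Finset.mem_image.2 ⟨a0, ha0, he0⟩)
    have e1 : f w' = if h2' : w' ∈ Bnew then ν (Bnew.equivFin ⟨w', h2'⟩) else Sum.inr 0 :=
      dif_neg hni
    rw [e1, dif_pos hw']
  have hbf : ∀ i2 : Fin r, f (b i2) = ν i2 := by
    intro i2
    rw [fB (b i2) (hbmem i2)]
    congr 1
    have h1 : (⟨b i2, hbmem i2⟩ : {x // x ∈ Bnew}) = Bnew.equivFin.symm i2 := Subtype.ext rfl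
    rw [h1, Equiv.apply_symm_apply]
  have hBcases : ∀ w' ∈ B, (∃ a0, a0 ∈ A ∧ e a0 = w') ∨ w' ∈ Bnew := by
    intro w' hw'
    by_cases h : w' ∈ A.image ⇑e
    · obtain ⟨a0, ha0, he0⟩ := Finset.mem_image.1 h
      exact Or.inl ⟨a0, ha0, he0⟩
    · exact Or.inr (by rw [hBnewdef, Finset.mem_sdiff]; exact ⟨hw', h⟩)
  -- adjacency between a tuple vertex and a new vertex in the candidate
  have hcandAν : ∀ a0 ∈ A, ∀ i2 : Fin r,
      ((candG s.1 base t).Adj a0 (ν i2) ↔ H'.Adj (b i2) (e a0)) := by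
    intro a0 ha0 i2
    constructor
    · intro h
      rw [candG_adj] at h
      rcases h with h | ⟨i2', j2', h1, h2', h3, h4⟩ | ⟨i2', hcr⟩
      · exact absurd h.symm (hνiso i2 a0)
      · exact absurd h1.symm (hAnotν a0 ha0 i2')
      · rcases hcr with ⟨h1, -, -, -⟩ | ⟨h1, hw1, hw2, hw3⟩
        · exact absurd h1.symm (hAnotν a0 ha0 i2')
        · have : i2' = i2 := hνinj h1.symm
          subst this
          rw [htce] at hw2
          exact (Finset.mem_filter.1 hw2).2
    · intro h
      rw [candG_adj]
      refine Or.inr (Or.inr ⟨i2, Or.inr ⟨rfl, ?_, ?_, ?_⟩⟩)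
      · rw [ht1]; exact ha0
      · rw [htce]
        refine Finset.mem_filter.2 ⟨?_, h⟩
        exact Finset.mem_product.2 ⟨Finset.mem_univ _, ha0⟩
      · exact hAidx a0 ha0
  have hcandνν : ∀ i2 j2 : Fin r,
      ((candG s.1 base t).Adj (ν i2) (ν j2) ↔ H'.Adj (b i2) (b j2)) := by
    intro i2 j2
    constructor
    · intro h
      rw [candG_adj] at h
      rcases h with h | ⟨i2', j2', h1, h2', h3, h4⟩ | ⟨i2', hcr⟩
      · exact absurd h (hνiso i2 (ν j2))
      · have hii : i2' = i2 := hνinj h1.symm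
        have hjj : j2' = j2 := hνinj h2'.symm
        subst hii; subst hjj
        rw [htpe] at h4
        rcases h4 with h4 | h4
        · exact (Finset.mem_filter.1 h4).2
        · exact ((Finset.mem_filter.1 h4).2).symm
      · rcases hcr with ⟨h1, hw1, -, -⟩ | ⟨h1, hw1, -, -⟩
        · rw [ht1] at hw1
          exact absurd rfl (hAnotν _ hw1 j2)
        · rw [ht1] at hw1
          exact absurd rfl (hAnotν _ hw1 i2)
    · intro h
      rw [candG_adj]
      have hne : i2 ≠ j2 := by
        intro hcon
        subst hcon
        exact H'.loopless.irrefl _ h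
      refine Or.inr (Or.inl ⟨i2, j2, rfl, rfl, hne, Or.inl ?_⟩)
      rw [htpe]
      refine Finset.mem_filter.2 ⟨?_, h⟩
      exact Finset.mem_product.2 ⟨Finset.mem_univ _, Finset.mem_univ _⟩
  -- finish
  refine ⟨f, ?_, fid, ?_⟩
  · -- injectivity on B
    intro u hu v hv huv
    rcases hBcases u hu with ⟨a0, ha0, rfl⟩ | huB <;> rcases hBcases v hv with ⟨a1, ha1, rfl⟩ | hvB
    · rw [fid a0 ha0, fid a1 ha1] at huv
      rw [huv]
    · rw [fid a0 ha0, fB v hvB] at huv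
      exact absurd huv.symm (hAnotν a0 ha0 _)
    · rw [fB u huB, fid a1 ha1] at huv
      exact absurd huv (hAnotν a1 ha1 _)
    · rw [fB u huB, fB v hvB] at huv
      have := hνinj huv
      have h1 : (⟨u, huB⟩ : {x // x ∈ Bnew}) = ⟨v, hvB⟩ := Bnew.equivFin.injective this
      exact congrArg Subtype.val h1
  · -- induced isomorphism on B
    intro u hu v hv
    rcases hBcases u hu with ⟨a0, ha0, rfl⟩ | huB <;> rcases hBcases v hv with ⟨a1, ha1, rfl⟩ | hvB
    · rw [fid a0 ha0, fid a1 ha1]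
      exact e.map_rel_iff.symm.symm
    · rw [fid a0 ha0, fB v hvB]
      set i2 := Bnew.equivFin ⟨v, hvB⟩ with hi2def
      have hbv : b i2 = v := by
        rw [hbdef, hi2def]
        simp only
        rw [Equiv.symm_apply_apply]
      rw [hMadj a0 (ν i2) (hAold a0 ha0) (hνold i2), hcandAν a0 ha0 i2, hbv]
      exact ⟨fun h => h.symm, fun h => h.symm⟩
    · rw [fB u huB, fid a1 ha1]
      set i2 := Bnew.equivFin ⟨u, huB⟩ with hi2def
      have hbu : b i2 = u := by
        rw [hbdef, hi2def]
        simp only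
        rw [Equiv.symm_apply_apply]
      rw [hMadj (ν i2) a1 (hνold i2) (hAold a1 ha1)]
      rw [SimpleGraph.adj_comm ((candG s.1 base t)) (ν i2) a1]
      rw [hcandAν a1 ha1 i2, hbu]
    · rw [fB u huB, fB v hvB]
      set i2 := Bnew.equivFin ⟨u, huB⟩ with hi2def
      set j2 := Bnew.equivFin ⟨v, hvB⟩ with hj2def
      have hbu : b i2 = u := by
        rw [hbdef, hi2def]; simp only; rw [Equiv.symm_apply_apply]
      have hbv : b j2 = v := by
        rw [hbdef, hj2def]; simp only; rw [Equiv.symm_apply_apply]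
      rw [hMadj (ν i2) (ν j2) (hνold i2) (hνold j2), hcandνν i2 j2, hbu, hbv]

end S8

section S9

variable {ι : Type} {nn : ι → ℕ} {𝒞 : ∀ i, SimpleGraph (Fin (nn i))}

theorem tsk_countable {W₀ : Type} [Countable W₀] : Countable (Tsk W₀) := by
  unfold Tsk
  infer_instance

theorem bot_empty_cfree (hconn : ∀ i, (𝒞 i).Connected) :
    CFree 𝒞 (⊥ : SimpleGraph Empty) := by
  intro i ⟨f, hf⟩
  exact (f (hconn i).nonempty.some).elim

theorem exists_ec_ext [Finite ι] (h2 : ∀ i, 2 ≤ nn i) (hconn : ∀ i, (𝒞 i).Connected)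
    (hclosed : HomClosed 𝒞) {W₀ : Type} (H₀ : SimpleGraph W₀) [Countable W₀]
    (hfree : CFree 𝒞 H₀) :
    ∃ M : SimpleGraph (W₀ ⊕ ℕ), InEC 𝒞 M ∧ Nonempty (H₀ ↪g M) := by
  haveI : Countable (Tsk W₀) := tsk_countable
  haveI : Nonempty (Tsk W₀) := ⟨(∅, ⟨0, ∅, ∅⟩)⟩
  obtain ⟨τ, hτ⟩ := exists_surjective_nat (Tsk W₀)
  exact ⟨limitG 𝒞 H₀ τ, limit_inEC h2 hconn hclosed inferInstance hfree hτ,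
    ⟨⟨⟨Sum.inl, Sum.inl_injective⟩, fun {a b} => limit_inl_adj a b⟩⟩⟩

theorem deg_empty (i0 : ι) (h1 : nn i0 = 1) {V : Type} {G : SimpleGraph V}
    (hfree : CFree 𝒞 G) : IsEmpty V := by
  by_contra h
  rw [not_isEmpty_iff] at h
  obtain ⟨v⟩ := h
  refine hfree i0 ⟨⟨fun _ => v, fun a b _ => ?_⟩, fun u v0 huv => ?_⟩
  · apply Fin.ext
    have ha := a.2
    have hb := b.2
    omega
  · have huv0 : u = v0 := by
      apply Fin.ext
      have ha := u.2
      have hb := v0.2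
      omega
    rw [huv0] at huv
    exact ((𝒞 i0).loopless.irrefl _ huv).elim

end S9

/-- if every homomorphic image of a member of `𝒞` contains a member of `𝒞` as
a subgraph, then algebraic closure is trivial on `E_𝒞`, `T*_𝒞` is `ℵ₀`-categorical, and
there is a universal countable `𝒞`-free graph. -/
theorem stmt_7 {ι : Type} [Finite ι] {nn : ι → ℕ} (𝒞 : ∀ i, SimpleGraph (Fin (nn i)))
    (hconn : ∀ i, (𝒞 i).Connected) (hclosed : HomClosed 𝒞) :
    (∀ (V : Type) (G : SimpleGraph V), InEC 𝒞 G → ∀ A : Set V, aclG G A = A) ∧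
    (∀ (V W : Type) (G : SimpleGraph V) (H : SimpleGraph W),
      InEC 𝒞 G → InEC 𝒞 H → Nonempty (G ≃g H)) ∧
    ExistsUniversal 𝒞 := by
  classical
  by_cases hdeg : ∃ i0, nn i0 = 1
  · obtain ⟨i0, h1⟩ := hdeg
    refine ⟨?_, ?_, ?_⟩
    · intro V G hG A
      haveI := deg_empty i0 h1 hG.2.1
      ext a
      exact isEmptyElim a
    · intro V W G H hG hH
      haveI := deg_empty i0 h1 hG.2.1
      haveI := deg_empty i0 h1 hH.2.1
      exact ⟨⟨⟨isEmptyElim, isEmptyElim, fun a => isEmptyElim a, fun b => isEmptyElim b⟩,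
        fun {a b} => isEmptyElim a⟩⟩
    · refine ⟨Empty, ⊥, inferInstance, bot_empty_cfree hconn, ?_⟩
      intro W' H' hcnt' hfree'
      haveI := deg_empty i0 h1 hfree'
      exact ⟨⟨⟨isEmptyElim, fun a => isEmptyElim a⟩, fun {a b} => isEmptyElim a⟩⟩
  · push_neg at hdeg
    have h2 : ∀ i, 2 ≤ nn i := by
      intro i
      obtain ⟨a⟩ := (hconn i).nonempty
      have ha := a.2
      have hb := hdeg i
      omega
    refine ⟨fun V G hG A => acl_triv hconn hclosed hG A, ?_, ?_⟩
    · intro V W G H hG hH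
      by_cases hV : Nonempty V
      · by_cases hW : Nonempty W
        · exact ec_iso hconn hclosed hG hH hV hW
        · rw [not_nonempty_iff] at hW
          obtain ⟨v0⟩ := hV
          obtain ⟨f, -, -, -⟩ := hH.2.2 V G hG.1 hG.2.1
            ⟨⟨fun w => isEmptyElim w, fun a => isEmptyElim a⟩, fun {a b} => isEmptyElim a⟩
            ∅ {v0} (by simp)
          exact (hW.false (f v0)).elim
      · rw [not_nonempty_iff] at hV
        by_cases hW : Nonempty W
        · obtain ⟨w0⟩ := hW
          obtain ⟨f, -, -, -⟩ := hG.2.2 W H hH.1 hH.2.1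
            ⟨⟨fun v => isEmptyElim v, fun a => isEmptyElim a⟩, fun {a b} => isEmptyElim a⟩
            ∅ {w0} (by simp)
          exact (hV.false (f w0)).elim
        · rw [not_nonempty_iff] at hW
          exact ⟨⟨⟨isEmptyElim, isEmptyElim, fun a => isEmptyElim a, fun b => isEmptyElim b⟩,
            fun {a b} => isEmptyElim a⟩⟩
    · obtain ⟨M0, hM0, -⟩ := exists_ec_ext h2 hconn hclosed (⊥ : SimpleGraph Empty)
        (bot_empty_cfree hconn)
      refine ⟨Empty ⊕ ℕ, M0, hM0.1, hM0.2.1, ?_⟩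
      intro W' H' hcnt' hfree'
      haveI := hcnt'
      obtain ⟨MH, hMH, ⟨em⟩⟩ := exists_ec_ext h2 hconn hclosed H' hfree'
      obtain ⟨φiso⟩ := ec_iso hconn hclosed hMH hM0 ⟨Sum.inr 0⟩ ⟨Sum.inr 0⟩
      exact ⟨em.trans φiso.toRelEmbedding⟩
end
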